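/- arXiv:1810.02961 — 6 statements merged into one kernel-verified Lean document; each statement's English description precedes it below -/
import Mathlib

section
/- Let A be a surjective d×n integer matrix such that, for each i, deleting column i from A still gives a surjective map ℤ^{n-1} → ℤ^d. Then for every ξ ∈ ℂ^d, the singular locus of μ^{-1}(ξ) has codimension at least 2 in μ^{-1}(ξ), where μ(z,w) = Σ_j z_j w_j a_j. -/
open MvPolynomial


open Order in
lemma my_krullDim_add_two_le {α β : Type*} [Preorder α] [Preorder β]
    (H : ∀ p : LTSeries α, ∃ q : LTSeries β, q.length = p.length + 2) :
    Order.krullDim α + 2 ≤ Order.krullDim β := by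
  rcases isEmpty_or_nonempty α with h | h
  · rw [Order.krullDim_eq_bot, WithBot.bot_add]
    exact bot_le
  · have hne : Nonempty (LTSeries α) := ⟨RelSeries.singleton _ (Classical.arbitrary α)⟩
    obtain ⟨q0, _⟩ := H (RelSeries.singleton _ (Classical.arbitrary α))
    have hβ : Nonempty β := ⟨q0.head⟩
    rw [Order.krullDim_eq_iSup_length (α := α), Order.krullDim_eq_iSup_length (α := β)]
    have : (↑(⨆ p : LTSeries α, (p.length : ℕ∞)) : WithBot ℕ∞) + 2
        = (↑(⨆ p : LTSeries α, ((p.length : ℕ∞) + 2)) : WithBot ℕ∞) := by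
      rw [← ENat.iSup_add]
      norm_cast
    rw [this, WithBot.coe_le_coe]
    refine iSup_le fun p => ?_
    obtain ⟨q, hq⟩ := H p
    calc ((p.length : ℕ∞) + 2) = (q.length : ℕ∞) := by rw [hq]; push_cast; ring
    _ ≤ _ := le_iSup (fun q : LTSeries β => (q.length : ℕ∞)) q

lemma my_transfer {R : Type*} [CommRing R] (IV IZ : Ideal R) (hVZ : IV ≤ IZ)
    (KEY : ∀ p : Ideal R, p.IsPrime → IZ ≤ p → ∃ q₂ q₁ : Ideal R,
      q₂.IsPrime ∧ q₁.IsPrime ∧ IV ≤ q₂ ∧ q₂ < q₁ ∧ q₁ < p)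
    (p : LTSeries (PrimeSpectrum (R ⧸ IZ))) :
    ∃ q : LTSeries (PrimeSpectrum (R ⧸ IV)), q.length = p.length + 2 := by
  classical
  set πZ := Ideal.Quotient.mk IZ
  -- map the series into Spec R
  have hinj : Function.Injective fun I : Ideal (R ⧸ IZ) => I.comap πZ :=
    Ideal.comap_injective_of_surjective πZ Ideal.Quotient.mk_surjective
  have hf : StrictMono (fun pp : PrimeSpectrum (R ⧸ IZ) =>
      (⟨pp.asIdeal.comap πZ, inferInstance⟩ : PrimeSpectrum R)) := by
    have hmono : Monotone (fun pp : PrimeSpectrum (R ⧸ IZ) =>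
        (⟨pp.asIdeal.comap πZ, inferInstance⟩ : PrimeSpectrum R)) := by
      intro a b hab
      rw [← PrimeSpectrum.asIdeal_le_asIdeal] at hab ⊢
      exact Ideal.comap_mono hab
    refine hmono.strictMono_of_injective ?_
    intro a b hab
    ext1
    exact hinj (congrArg PrimeSpectrum.asIdeal hab)
  set P : LTSeries (PrimeSpectrum R) := p.map _ hf with hPdef
  have hPZ : ∀ k, IZ ≤ (P k).asIdeal := by
    intro k
    have : P k = ⟨(p k).asIdeal.comap πZ, inferInstance⟩ := rfl
    rw [this]
    exact le_trans (le_of_eq Ideal.mk_ker.symm) (Ideal.ker_le_comap πZ)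
  obtain ⟨q₂, q₁, hq₂p, hq₁p, hIVq₂, h21, h1h⟩ :=
    KEY P.head.asIdeal P.head.isPrime (hPZ 0)
  set Q : LTSeries (PrimeSpectrum R) :=
    (P.cons ⟨q₁, hq₁p⟩ ((PrimeSpectrum.asIdeal_lt_asIdeal _ _).mp h1h)).cons
      ⟨q₂, hq₂p⟩ (by
        rw [RelSeries.head_cons]
        exact (PrimeSpectrum.asIdeal_lt_asIdeal _ _).mp h21) with hQdef
  have hQhead : Q.head = ⟨q₂, hq₂p⟩ := RelSeries.head_cons _ _ _
  have hQV : ∀ k, IV ≤ (Q k).asIdeal := by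
    intro k
    refine le_trans hIVq₂ ?_
    have : Q.head ≤ Q k := Q.strictMono.monotone (Fin.zero_le k)
    rw [hQhead] at this
    rw [← PrimeSpectrum.asIdeal_le_asIdeal] at this
    exact this
  -- push down to Spec (R ⧸ IV)
  have hker : RingHom.ker (Ideal.Quotient.mk IV) = IV := Ideal.mk_ker
  have mprime : ∀ k, ((Q k).asIdeal.map (Ideal.Quotient.mk IV)).IsPrime := fun k =>
    Ideal.map_isPrime_of_surjective Ideal.Quotient.mk_surjective ((le_of_eq Ideal.mk_ker).trans (hQV k))
  have mlt : ∀ a b : Ideal R, IV ≤ a → a < b →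
      a.map (Ideal.Quotient.mk IV) < b.map (Ideal.Quotient.mk IV) := by
    intro a b ha hab
    refine lt_of_le_of_ne (Ideal.map_mono hab.le) ?_
    intro he
    have hc := congrArg (Ideal.comap (Ideal.Quotient.mk IV)) he
    rw [Ideal.comap_map_of_surjective _ Ideal.Quotient.mk_surjective,
      Ideal.comap_map_of_surjective _ Ideal.Quotient.mk_surjective,
      ← RingHom.ker_eq_comap_bot, hker, sup_eq_left.2 ha,
      sup_eq_left.2 (le_trans ha hab.le)] at hc
    exact hab.ne hc
  refine ⟨⟨Q.length, fun k => ⟨(Q k).asIdeal.map (Ideal.Quotient.mk IV), mprime k⟩,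
      fun i => ?_⟩, ?_⟩
  · change (_ : PrimeSpectrum (R ⧸ IV)) < _
    rw [← PrimeSpectrum.asIdeal_lt_asIdeal]
    exact mlt _ _ (hQV _) ((PrimeSpectrum.asIdeal_lt_asIdeal _ _).mpr (Q.step i))
  · show Q.length = p.length + 2
    simp [hQdef, hPdef]
open MvPolynomial

section aux
variable {d n : ℕ} (A : Matrix (Fin d) (Fin n) ℤ) (ξ : Fin d → ℂ)

private lemma my_lam_exists (hA : Function.Surjective A.mulVec) (u : Fin d → ℂ) :
    ∃ lam : Fin n → ℂ, ∀ r, ∑ i, (A r i : ℂ) * lam i = u r := by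
  choose y hy using fun r : Fin d => hA (Pi.single r 1)
  refine ⟨fun i => ∑ r, u r * (y r i : ℂ), fun r' => ?_⟩
  have hcast : ∀ r, ∑ i, (A r' i : ℂ) * (y r i : ℂ) = ((Pi.single r 1 : Fin d → ℤ) r' : ℂ) := by
    intro r
    have := congrFun (hy r) r'
    simp only [Matrix.mulVec, dotProduct] at this
    rw [← this]
    push_cast
    rfl
  calc ∑ i, (A r' i : ℂ) * ∑ r, u r * (y r i : ℂ)
      = ∑ r, u r * ∑ i, (A r' i : ℂ) * (y r i : ℂ) := by
        simp_rw [Finset.mul_sum]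
        rw [Finset.sum_comm]
        exact Finset.sum_congr rfl fun r _ => Finset.sum_congr rfl fun i _ => by ring
    _ = ∑ r, u r * ((Pi.single r 1 : Fin d → ℤ) r' : ℂ) := by
        exact Finset.sum_congr rfl fun r _ => by rw [hcast r]
    _ = u r' := by
        simp [Pi.single_apply]

private lemma my_jac_surj (hA : Function.Surjective A.mulVec) (x : (Fin n ⊕ Fin n) → ℂ)
    (hx : ∀ i, x (Sum.inl i) ≠ 0 ∨ x (Sum.inr i) ≠ 0) :
    Function.Surjective (fun v : (Fin n ⊕ Fin n) → ℂ => fun r : Fin d =>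
      ∑ i, (A r i : ℂ) * (x (Sum.inr i) * v (Sum.inl i) + x (Sum.inl i) * v (Sum.inr i))) := by
  intro u
  obtain ⟨lam, hlam⟩ := my_lam_exists A hA u
  classical
  refine ⟨Sum.elim (fun i => if x (Sum.inr i) ≠ 0 then lam i / x (Sum.inr i) else 0)
    (fun i => if x (Sum.inr i) ≠ 0 then 0 else lam i / x (Sum.inl i)), ?_⟩
  funext r
  rw [← hlam r]
  refine Finset.sum_congr rfl fun i _ => ?_
  by_cases h : x (Sum.inr i) ≠ 0
  · simp only [Sum.elim_inl, Sum.elim_inr, if_pos h]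
    field_simp
    ring
  · have hzl : x (Sum.inl i) ≠ 0 := by
      rcases hx i with h' | h'
      · exact h'
      · exact absurd h' (not_not.mpr (not_not.mp h))
    simp only [Sum.elim_inl, Sum.elim_inr, if_neg h]
    rw [not_not] at h
    rw [h]
    field_simp
    ring

end aux

section aux2
variable {d n : ℕ} (A : Matrix (Fin d) (Fin n) ℤ) (ξ : Fin d → ℂ)

private def myZ : Set ((Fin n ⊕ Fin n) → ℂ) :=
  {x : (Fin n ⊕ Fin n) → ℂ |
    (∀ j : Fin d, ∑ i : Fin n, (A j i : ℂ) * x (Sum.inl i) * x (Sum.inr i) = ξ j) ∧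
    ¬ Function.Surjective (fun v : (Fin n ⊕ Fin n) → ℂ => fun r : Fin d =>
      ∑ i : Fin n, (A r i : ℂ) *
        (x (Sum.inr i) * v (Sum.inl i) + x (Sum.inl i) * v (Sum.inr i)))}

private def myV : Set ((Fin n ⊕ Fin n) → ℂ) :=
  {x : (Fin n ⊕ Fin n) → ℂ |
    ∀ j : Fin d, ∑ i : Fin n, (A j i : ℂ) * x (Sum.inl i) * x (Sum.inr i) = ξ j}

private lemma myZ_pair (hA : Function.Surjective A.mulVec) {x : (Fin n ⊕ Fin n) → ℂ}
    (hx : x ∈ myZ A ξ) : ∃ i, x (Sum.inl i) = 0 ∧ x (Sum.inr i) = 0 := by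
  by_contra h
  push_neg at h
  refine hx.2 (my_jac_surj A hA x fun i => ?_)
  by_cases hz : x (Sum.inl i) = 0
  · exact Or.inr (h i hz)
  · exact Or.inl hz

private lemma my_exists_pair (hA : Function.Surjective A.mulVec) (p : Ideal (MvPolynomial (Fin n ⊕ Fin n) ℂ))
    (hp : p.IsPrime) (hZp : vanishingIdeal ℂ (myZ A ξ) ≤ p) :
    ∃ i₀ : Fin n, X (Sum.inl i₀) ∈ p ∧ X (Sum.inr i₀) ∈ p := by
  classical
  by_contra h
  push_neg at h
  set g : Fin n → (Fin n ⊕ Fin n) := fun i =>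
    if X (Sum.inl i) (R := ℂ) ∈ p then Sum.inr i else Sum.inl i with hg
  have hmem : (∏ i, (X (g i) : MvPolynomial (Fin n ⊕ Fin n) ℂ)) ∈ p := by
    refine hZp ?_
    rw [mem_vanishingIdeal_iff]
    intro x hx
    obtain ⟨i, hzi, hwi⟩ := myZ_pair A ξ hA hx
    rw [map_prod]
    refine Finset.prod_eq_zero (Finset.mem_univ i) ?_
    rw [aeval_X]
    rw [hg]
    by_cases hc : X (Sum.inl i) (R := ℂ) ∈ p <;> simp [hc, hzi, hwi]
  rw [Ideal.IsPrime.prod_mem_iff] at hmem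
  obtain ⟨i, _, hi⟩ := hmem
  by_cases hc : X (Sum.inl i) (R := ℂ) ∈ p
  · rw [show g i = Sum.inr i by rw [hg]; exact if_pos hc] at hi
    exact h i hc hi
  · rw [show g i = Sum.inl i by rw [hg]; exact if_neg hc] at hi
    exact hc hi

end aux2
open MvPolynomial

noncomputable section aux3

variable {n : ℕ} {K : Type*} [CommRing K] [IsDomain K]

open Classical in
private def gfun (i₀ : Fin n) (c'' : Fin n → ℤ) (zb wb : Fin n → K) : Fin n → K := fun j =>
  if j = i₀ ∨ c'' j = 0 then 1
  else if zb j ≠ 0 then zb j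
  else if wb j ≠ 0 then wb j
  else 1

private def Efun (i₀ : Fin n) (c'' : Fin n → ℤ) (zb wb : Fin n → K) : K :=
  ∏ j, gfun i₀ c'' zb wb j

private def ffun (i₀ : Fin n) (c'' : Fin n → ℤ) (zb wb : Fin n → K) : Fin n → K := fun j =>
  ∏ k ∈ Finset.univ.erase j, gfun i₀ c'' zb wb k

variable (i₀ : Fin n) (c'' : Fin n → ℤ) (zb wb : Fin n → K)

private lemma gfun_mul_ffun (j : Fin n) :
    gfun i₀ c'' zb wb j * ffun i₀ c'' zb wb j = Efun i₀ c'' zb wb :=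
  Finset.mul_prod_erase Finset.univ _ (Finset.mem_univ j)

private lemma gfun_ne_zero (j : Fin n) : gfun i₀ c'' zb wb j ≠ 0 := by
  unfold gfun
  split_ifs with h1 h2 h3
  · exact one_ne_zero
  · exact h2
  · exact h3
  · exact one_ne_zero


private lemma Efun_ne_zero : Efun i₀ c'' zb wb ≠ 0 :=
  Finset.prod_ne_zero_iff.mpr fun j _ => gfun_ne_zero i₀ c'' zb wb j

open Classical in
private def valL : Fin n → MvPolynomial (Fin 2) K := fun j =>
  if j = i₀ then C (Efun i₀ c'' zb wb) * X 0
  else if c'' j = 0 then C (zb j)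
  else if zb j ≠ 0 then C (zb j)
  else if wb j ≠ 0 then C (zb j) + C ((c'' j : K) * ffun i₀ c'' zb wb j) * (X 0 * X 1)
  else C ((c'' j : K) * Efun i₀ c'' zb wb) * X 0

open Classical in
private def valR : Fin n → MvPolynomial (Fin 2) K := fun j =>
  if j = i₀ then X 1
  else if c'' j = 0 then C (wb j)
  else if zb j ≠ 0 then C (wb j) + C ((c'' j : K) * ffun i₀ c'' zb wb j) * (X 0 * X 1)
  else if wb j ≠ 0 then C (wb j)
  else X 1

private lemma valLR_prod (hzb0 : zb i₀ = 0) (hc0 : c'' i₀ = 1) (i : Fin n) :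
    valL i₀ c'' zb wb i * valR i₀ c'' zb wb i
      = C (zb i * wb i) + C ((c'' i : K) * Efun i₀ c'' zb wb) * (X 0 * X 1) := by
  unfold valL valR
  by_cases h1 : i = i₀
  · subst h1
    simp only [if_pos rfl]
    rw [hzb0, hc0]
    push_cast
    rw [zero_mul, map_zero, one_mul]
    ring
  · by_cases h2 : c'' i = 0
    · simp only [if_neg h1, if_pos h2]
      rw [h2]
      push_cast
      rw [zero_mul, map_zero, zero_mul, map_mul, add_zero]
    · by_cases h3 : zb i ≠ 0
      · have hgi : gfun i₀ c'' zb wb i = zb i := by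
          unfold gfun
          rw [if_neg (by tauto), if_pos h3]
        simp only [if_neg h1, if_neg h2, if_pos h3]
        have h5 : zb i * ((c'' i : K) * ffun i₀ c'' zb wb i) = (c'' i : K) * Efun i₀ c'' zb wb := by
          rw [← gfun_mul_ffun i₀ c'' zb wb i, hgi]; ring
        rw [mul_add, ← map_mul, ← mul_assoc (C (zb i)), ← map_mul, h5]
      · by_cases h4 : wb i ≠ 0
        · have hgi : gfun i₀ c'' zb wb i = wb i := by
            unfold gfun
            rw [if_neg (by tauto), if_neg h3, if_pos h4]
          simp only [if_neg h1, if_neg h2, if_neg h3, if_pos h4]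
          have h5 : (c'' i : K) * ffun i₀ c'' zb wb i * wb i
              = (c'' i : K) * Efun i₀ c'' zb wb := by
            rw [← gfun_mul_ffun i₀ c'' zb wb i, hgi]; ring
          rw [add_mul, ← map_mul, mul_assoc, mul_comm (X 0 * X 1), ← mul_assoc, ← map_mul, h5]
        · rw [not_not] at h3 h4
          simp only [if_neg h1, if_neg h2, if_neg (not_not_intro h3), if_neg (not_not_intro h4)]
          rw [h3, h4, zero_mul, map_zero, zero_add, mul_assoc]

private def ev1K : MvPolynomial (Fin 2) K →+* MvPolynomial (Fin 2) K :=
  eval₂Hom C (fun k => if k = 0 then X 0 else 0)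

private def ev0K : MvPolynomial (Fin 2) K →+* MvPolynomial (Fin 2) K :=
  eval₂Hom C (fun _ => 0)

private lemma ev1K_C (x : K) : ev1K (C x) = C x := by simp [ev1K]
private lemma ev0K_C (x : K) : ev0K (C x) = C x := by simp [ev0K]
private lemma ev1K_X0 : ev1K (X 0 : MvPolynomial (Fin 2) K) = X 0 := by simp [ev1K]
private lemma ev1K_X1 : ev1K (X 1 : MvPolynomial (Fin 2) K) = 0 := by
  rw [ev1K, eval₂Hom_X']
  norm_num
private lemma ev0K_X (k : Fin 2) : ev0K (X k : MvPolynomial (Fin 2) K) = 0 := by simp [ev0K]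
private lemma ev1K_X01 : ev1K ((X 0 : MvPolynomial (Fin 2) K) * X 1) = 0 := by
  rw [map_mul, ev1K_X1, mul_zero]

private lemma ev1K_valL_i₀ :
    ev1K (valL i₀ c'' zb wb i₀) = C (Efun i₀ c'' zb wb) * X 0 := by
  rw [valL]
  split_ifs with h
  · rw [map_mul, ev1K_C, ev1K_X0]
  all_goals exact absurd rfl h

private lemma ev1K_valR_i₀ : ev1K (valR i₀ c'' zb wb i₀) = 0 := by
  rw [valR]
  split_ifs with h
  · exact ev1K_X1
  all_goals exact absurd rfl h

private lemma ev01K_valL (hzb0 : zb i₀ = 0) (j : Fin n) :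
    ev0K (ev1K (valL i₀ c'' zb wb j)) = C (zb j) := by
  rw [valL]
  split_ifs with h1 h2 h3 h4
  · subst h1
    rw [map_mul, ev1K_C, ev1K_X0, map_mul, ev0K_C, ev0K_X, mul_zero, hzb0, map_zero]
  · rw [ev1K_C, ev0K_C]
  · rw [ev1K_C, ev0K_C]
  · rw [map_add, map_mul, ev1K_X01, mul_zero, add_zero, ev1K_C, ev0K_C]
  · push_neg at h3
    rw [map_mul, ev1K_C, ev1K_X0, map_mul, ev0K_C, ev0K_X, mul_zero, h3, map_zero]

private lemma ev01K_valR (hwb0 : wb i₀ = 0) (j : Fin n) :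
    ev0K (ev1K (valR i₀ c'' zb wb j)) = C (wb j) := by
  rw [valR]
  split_ifs with h1 h2 h3 h4
  · subst h1
    rw [ev1K_X1, map_zero, hwb0, map_zero]
  · rw [ev1K_C, ev0K_C]
  · rw [map_add, map_mul, ev1K_X01, mul_zero, add_zero, ev1K_C, ev0K_C]
  · rw [ev1K_C, ev0K_C]
  · push_neg at h4
    rw [ev1K_X1, map_zero, h4, map_zero]

private lemma my_sum_helper (m : ℕ) (a b e : Fin m → K) (t : K)
    (h1 : (∑ i, a i * b i) - t = 0) (h2 : ∑ i, a i * e i = 0) :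
    (∑ i, C (a i) * (C (b i) + C (e i) * ((X 0 : MvPolynomial (Fin 2) K) * X 1))) - C t = 0 := by
  have key : (∑ i, C (a i) * (C (b i) + C (e i) * ((X 0 : MvPolynomial (Fin 2) K) * X 1)))
      = C (∑ i, a i * b i) + C (∑ i, a i * e i) * (X 0 * X 1) := by
    rw [map_sum, map_sum, Finset.sum_mul, ← Finset.sum_add_distrib]
    refine Finset.sum_congr rfl fun i _ => ?_
    rw [mul_add, map_mul, map_mul, mul_assoc]
  rw [key, h2, map_zero, zero_mul, add_zero, ← map_sub, ← map_zero (C : K →+* MvPolynomial (Fin 2) K), h1]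

private lemma valR_at_i₀ : valR i₀ c'' zb wb i₀ = X 1 := by
  rw [valR]
  exact if_pos rfl

private lemma my_coeff_zero (m : ℕ) (a c : Fin m → ℤ) (E : K)
    (h : ∑ i, a i * c i = 0) :
    ∑ i, ((a i : K)) * ((c i : K) * E) = 0 := by
  have h2 : ∀ i, (a i : K) * ((c i : K) * E) = ((a i * c i : ℤ) : K) * E := by
    intro i; push_cast; ring
  rw [Finset.sum_congr rfl fun i _ => h2 i, ← Finset.sum_mul, ← Int.cast_sum, h]
  simp

end aux3

noncomputable section aux4
open MvPolynomial

variable {d n : ℕ} (A : Matrix (Fin d) (Fin n) ℤ) (ξ : Fin d → ℂ)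

private def myF' (r : Fin d) : MvPolynomial (Fin n ⊕ Fin n) ℂ :=
  (∑ i, C ((A r i : ℂ)) * X (Sum.inl i) * X (Sum.inr i)) - C (ξ r)

private def myJ' : Ideal (MvPolynomial (Fin n ⊕ Fin n) ℂ) :=
  Ideal.span (Set.range (myF' A ξ))

private lemma my_key (p : Ideal (MvPolynomial (Fin n ⊕ Fin n) ℂ)) (hp : p.IsPrime)
    (i₀ : Fin n) (hz : X (Sum.inl i₀) ∈ p) (hw : X (Sum.inr i₀) ∈ p)
    (c'' : Fin n → ℤ) (hc : ∀ r, ∑ i, A r i * c'' i = 0) (hc0 : c'' i₀ = 1)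
    (hJp : myJ' A ξ ≤ p) :
    ∃ q₂ q₁ : Ideal (MvPolynomial (Fin n ⊕ Fin n) ℂ), q₂.IsPrime ∧ q₁.IsPrime ∧
      myJ' A ξ ≤ q₂ ∧ q₂ < q₁ ∧ q₁ < p := by
  classical
  haveI := hp
  let π : MvPolynomial (Fin n ⊕ Fin n) ℂ →+* (MvPolynomial (Fin n ⊕ Fin n) ℂ ⧸ p) :=
    Ideal.Quotient.mk p
  let Rp := MvPolynomial (Fin n ⊕ Fin n) ℂ ⧸ p
  let zb : Fin n → Rp := fun j => π (X (Sum.inl j))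
  let wb : Fin n → Rp := fun j => π (X (Sum.inr j))
  have hzb0 : zb i₀ = 0 := Ideal.Quotient.eq_zero_iff_mem.mpr hz
  have hwb0 : wb i₀ = 0 := Ideal.Quotient.eq_zero_iff_mem.mpr hw
  let φ : ℂ →+* MvPolynomial (Fin 2) Rp :=
    (C : Rp →+* MvPolynomial (Fin 2) Rp).comp (π.comp (C : ℂ →+* MvPolynomial (Fin n ⊕ Fin n) ℂ))
  let ψ : MvPolynomial (Fin n ⊕ Fin n) ℂ →+* MvPolynomial (Fin 2) Rp :=
    eval₂Hom φ (Sum.elim (valL i₀ c'' zb wb) (valR i₀ c'' zb wb))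
  let ψ₁ := ev1K.comp ψ
  let ψ₀ := ev0K.comp ψ₁
  have hψC : ∀ a : ℂ, ψ (C a) = C (π (C a)) := fun a => eval₂Hom_C _ _ _
  have hψXl : ∀ j, ψ (X (Sum.inl j)) = valL i₀ c'' zb wb j := fun j => eval₂Hom_X' _ _ _
  have hψXr : ∀ j, ψ (X (Sum.inr j)) = valR i₀ c'' zb wb j := fun j => eval₂Hom_X' _ _ _
  have hφint : ∀ m : ℤ, ψ (C ((m : ℂ))) = C ((m : Rp)) := by
    intro m
    rw [hψC]
    norm_cast
  -- ψ kills the defining equations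
  have SUM : ∀ r, ψ (myF' A ξ r) = 0 := by
    intro r
    have expand : ψ (myF' A ξ r)
        = (∑ i, C ((A r i : Rp)) * (valL i₀ c'' zb wb i * valR i₀ c'' zb wb i))
          - C (π (C (ξ r))) := by
      rw [myF', map_sub, map_sum, hψC]
      congr 1
      refine Finset.sum_congr rfl fun i _ => ?_
      rw [map_mul, map_mul, hψXl, hψXr, hφint, mul_assoc]
    rw [expand]
    have hrw : ∀ i, valL i₀ c'' zb wb i * valR i₀ c'' zb wb i
        = C (zb i * wb i) + C ((c'' i : Rp) * Efun i₀ c'' zb wb) * (X 0 * X 1) :=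
      valLR_prod i₀ c'' zb wb hzb0 hc0
    simp_rw [hrw]
    refine my_sum_helper n (fun i => (A r i : Rp)) (fun i => zb i * wb i)
      (fun i => (c'' i : Rp) * Efun i₀ c'' zb wb) (π (C (ξ r))) ?_ ?_
    · have hmem : myF' A ξ r ∈ p := hJp (Ideal.subset_span ⟨r, rfl⟩)
      have hπF : π (myF' A ξ r) = 0 := Ideal.Quotient.eq_zero_iff_mem.mpr hmem
      rw [← hπF, myF', map_sub, map_sum]
      rw [sub_left_inj]
      refine Finset.sum_congr rfl fun i _ => ?_
      show ((A r i : Rp)) * (zb i * wb i) = π (C ((A r i : ℂ)) * X (Sum.inl i) * X (Sum.inr i))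
      rw [map_mul, map_mul, map_intCast (C : ℂ →+* MvPolynomial (Fin n ⊕ Fin n) ℂ) (A r i),
        map_intCast π (A r i), mul_assoc]
    · exact my_coeff_zero n (fun i => A r i) c'' (Efun i₀ c'' zb wb) (hc r)
  -- ψ₀ is just reduction mod p
  have hψ₀ : ∀ x, ψ₀ x = C (π x) := by
    have : ψ₀ = (C : Rp →+* MvPolynomial (Fin 2) Rp).comp π := by
      apply MvPolynomial.ringHom_ext
      · intro a
        show ev0K (ev1K (ψ (C a))) = C (π (C a))
        rw [hψC, ev1K_C, ev0K_C]
      · intro v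
        cases v with
        | inl j =>
          show ev0K (ev1K (ψ (X (Sum.inl j)))) = C (π (X (Sum.inl j)))
          rw [hψXl, ev01K_valL i₀ c'' zb wb hzb0 j]
        | inr j =>
          show ev0K (ev1K (ψ (X (Sum.inr j)))) = C (π (X (Sum.inr j)))
          rw [hψXr, ev01K_valR i₀ c'' zb wb hwb0 j]
    intro x
    rw [this]
    rfl
  -- assemble
  refine ⟨RingHom.ker ψ, RingHom.ker ψ₁, RingHom.ker_isPrime ψ, RingHom.ker_isPrime ψ₁,
    ?_, ?_, ?_⟩
  · rw [myJ', Ideal.span_le]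
    rintro x ⟨r, rfl⟩
    exact SUM r
  · refine lt_of_le_of_ne (fun x hx => ?_) (fun he => ?_)
    · rw [RingHom.mem_ker] at hx ⊢
      show ev1K (ψ x) = 0
      rw [hx, map_zero]
    · have hmem : X (Sum.inr i₀) ∈ RingHom.ker ψ₁ := by
        rw [RingHom.mem_ker]
        show ev1K (ψ (X (Sum.inr i₀))) = 0
        rw [hψXr, ev1K_valR_i₀]
      rw [← he, RingHom.mem_ker, hψXr] at hmem
      rw [valR_at_i₀] at hmem
      exact X_ne_zero _ hmem
  · refine lt_of_le_of_ne (fun x hx => ?_) (fun he => ?_)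
    · rw [RingHom.mem_ker] at hx
      have : ψ₀ x = 0 := by
        show ev0K (ψ₁ x) = 0
        rw [hx, map_zero]
      rw [hψ₀ x] at this
      have hπx : π x = 0 :=
        MvPolynomial.C_injective (Fin 2) Rp (by rwa [map_zero (C : Rp →+* MvPolynomial (Fin 2) Rp)])
      exact Ideal.Quotient.eq_zero_iff_mem.mp hπx
    · have hmem : X (Sum.inl i₀) ∈ RingHom.ker ψ₁ := by rw [he]; exact hz
      rw [RingHom.mem_ker] at hmem
      have : ψ₁ (X (Sum.inl i₀)) = C (Efun i₀ c'' zb wb) * X 0 := by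
        show ev1K (ψ (X (Sum.inl i₀))) = _
        rw [hψXl, ev1K_valL_i₀]
      rw [this] at hmem
      have hCne : (C (Efun i₀ c'' zb wb) : MvPolynomial (Fin 2) Rp) ≠ 0 := by
        rw [Ne, MvPolynomial.C_eq_zero]
        exact Efun_ne_zero i₀ c'' zb wb
      exact (mul_ne_zero hCne (X_ne_zero _)) hmem

end aux4

open MvPolynomial in
private lemma my_eval_myF' {d n : ℕ} (A : Matrix (Fin d) (Fin n) ℤ) (ξ : Fin d → ℂ)
    (r : Fin d) (x : (Fin n ⊕ Fin n) → ℂ) :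
    eval x (myF' A ξ r) = (∑ i, (A r i : ℂ) * x (Sum.inl i) * x (Sum.inr i)) - ξ r := by
  simp [myF']

open MvPolynomial in
private lemma my_V_eq_zeroLocus {d n : ℕ} (A : Matrix (Fin d) (Fin n) ℤ) (ξ : Fin d → ℂ) :
    myV A ξ = zeroLocus ℂ (myJ' A ξ) := by
  ext x
  rw [myJ', mem_zeroLocus_iff]
  simp only [aeval_eq_eval]
  constructor
  · intro hx f hf
    have : ∀ f ∈ Set.range (myF' A ξ), eval x f = 0 := by
      rintro f ⟨r, rfl⟩
      rw [my_eval_myF', hx r, sub_self]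
    -- span induction
    refine Submodule.span_induction (p := fun f _ => eval x f = 0) ?_ ?_ ?_ ?_ hf
    · exact this
    · simp
    · intro a b _ _ ha hb; rw [map_add, ha, hb, add_zero]
    · intro a b _ hb; rw [smul_eq_mul, map_mul, hb, mul_zero]
  · intro hx r
    have := hx (myF' A ξ r) (Ideal.subset_span ⟨r, rfl⟩)
    rw [my_eval_myF'] at this
    exact sub_eq_zero.mp this

open MvPolynomial in
private lemma my_main {d n : ℕ} (A : Matrix (Fin d) (Fin n) ℤ)
    (hA : Function.Surjective A.mulVec)
    (hdel : ∀ i : Fin n, Function.Surjective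
      (fun v : {j : Fin n // j ≠ i} → ℤ => fun r : Fin d =>
        ∑ j : {j : Fin n // j ≠ i}, A r j * v j))
    (ξ : Fin d → ℂ) :
    ringKrullDim (MvPolynomial (Fin n ⊕ Fin n) ℂ ⧸ vanishingIdeal ℂ (myZ A ξ)) + 2 ≤
    ringKrullDim (MvPolynomial (Fin n ⊕ Fin n) ℂ ⧸ vanishingIdeal ℂ (myV A ξ)) := by
  classical
  have hVZ : vanishingIdeal ℂ (myV A ξ) ≤ vanishingIdeal ℂ (myZ A ξ) :=
    vanishingIdeal_anti_mono fun x hx => hx.1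
  have hIVrad : vanishingIdeal ℂ (myV A ξ) = (myJ' A ξ).radical := by
    rw [my_V_eq_zeroLocus, vanishingIdeal_zeroLocus_eq_radical]
  have KEY : ∀ p : Ideal (MvPolynomial (Fin n ⊕ Fin n) ℂ), p.IsPrime →
      vanishingIdeal ℂ (myZ A ξ) ≤ p → ∃ q₂ q₁ : Ideal (MvPolynomial (Fin n ⊕ Fin n) ℂ),
      q₂.IsPrime ∧ q₁.IsPrime ∧ vanishingIdeal ℂ (myV A ξ) ≤ q₂ ∧ q₂ < q₁ ∧ q₁ < p := by
    intro p hp hZp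
    obtain ⟨i₀, hzi, hwi⟩ := my_exists_pair A ξ hA p hp hZp
    obtain ⟨v, hv⟩ := hdel i₀ (fun r => -(A r i₀))
    set c'' : Fin n → ℤ := fun j => if h : j = i₀ then 1 else v ⟨j, h⟩ with hc''def
    have hc0 : c'' i₀ = 1 := dif_pos rfl
    have hc : ∀ r, ∑ i, A r i * c'' i = 0 := by
      intro r
      rw [← Finset.add_sum_erase _ _ (Finset.mem_univ i₀)]
      have h1 : ∑ i ∈ Finset.univ.erase i₀, A r i * c'' i
          = ∑ j : {j : Fin n // j ≠ i₀}, A r j * v j := by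
        rw [Finset.sum_subtype (p := fun j : Fin n => j ≠ i₀) (Finset.univ.erase i₀)
          (fun x => by simp [Finset.mem_erase]) (fun i => A r i * c'' i)]
        refine Finset.sum_congr rfl fun j _ => ?_
        congr 1
        rw [hc''def]
        exact dif_neg j.2
      have h2 : ∑ j : {j : Fin n // j ≠ i₀}, A r (j : Fin n) * v j = -(A r i₀) := congrFun hv r
      rw [h1, h2, hc0, mul_one, add_neg_cancel]
    have hJV : myJ' A ξ ≤ vanishingIdeal ℂ (myV A ξ) := by
      rw [myJ', Ideal.span_le]
      rintro f ⟨r, rfl⟩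
      rw [SetLike.mem_coe, mem_vanishingIdeal_iff]
      simp only [aeval_eq_eval]
      intro x hx
      rw [my_eval_myF', hx r, sub_self]
    have hJp : myJ' A ξ ≤ p := le_trans hJV (le_trans hVZ hZp)
    obtain ⟨q₂, q₁, hq₂, hq₁, hJq₂, h21, h1p⟩ := my_key A ξ p hp i₀ hzi hwi c'' hc hc0 hJp
    refine ⟨q₂, q₁, hq₂, hq₁, ?_, h21, h1p⟩
    rw [hIVrad]
    exact hq₂.radical_le_iff.mpr hJq₂
  show Order.krullDim _ + 2 ≤ Order.krullDim _
  exact my_krullDim_add_two_le fun p =>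
    my_transfer (vanishingIdeal ℂ (myV A ξ)) (vanishingIdeal ℂ (myZ A ξ)) hVZ KEY p



/-- If deleting any single column of `A` still gives a surjection `ℤ^{n-1} → ℤ^d`
(equivalently every row of the kernel matrix `B` is nonzero), then for every `ξ`,
the singular locus of the fiber `μ⁻¹(ξ)` (points where the Jacobian of `μ` is not
surjective) has codimension at least 2 in `μ⁻¹(ξ)`. -/
theorem stmt_4 (d n : ℕ) (A : Matrix (Fin d) (Fin n) ℤ)
    (hA : Function.Surjective A.mulVec)
    (hdel : ∀ i : Fin n, Function.Surjective
      (fun v : {j : Fin n // j ≠ i} → ℤ => fun r : Fin d =>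
        ∑ j : {j : Fin n // j ≠ i}, A r j * v j))
    (ξ : Fin d → ℂ) :
    ringKrullDim (MvPolynomial (Fin n ⊕ Fin n) ℂ ⧸
        vanishingIdeal ℂ
          {x : (Fin n ⊕ Fin n) → ℂ |
            (∀ j : Fin d, ∑ i : Fin n, (A j i : ℂ) * x (Sum.inl i) * x (Sum.inr i) = ξ j) ∧
            ¬ Function.Surjective (fun v : (Fin n ⊕ Fin n) → ℂ => fun r : Fin d =>
              ∑ i : Fin n, (A r i : ℂ) *
                (x (Sum.inr i) * v (Sum.inl i) + x (Sum.inl i) * v (Sum.inr i)))}) + 2 ≤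
    ringKrullDim (MvPolynomial (Fin n ⊕ Fin n) ℂ ⧸
        vanishingIdeal ℂ
          {x : (Fin n ⊕ Fin n) → ℂ |
            ∀ j : Fin d, ∑ i : Fin n, (A j i : ℂ) * x (Sum.inl i) * x (Sum.inr i) = ξ j}) := by
  exact my_main A hA hdel ξ
end

section
/- Let 0 → ℤ^{n-d} →^B ℤ^n →^A ℤ^d → 0 be exact with A surjective. Then the invariant ring ℂ[z_1,…,z_n,w_1,…,w_n]^{T^d}, where the torus T^d = (ℂ*)^d acts by t·z_j = t^{a_j} z_j, t·w_j = t^{-a_j} w_j, equals the subalgebra generated by z_1w_1, …, z_nw_n together with the monomials f_β := ∏_{i: β_i > 0} z_i^{β_i} ∏_{i: β_i < 0} w_i^{-β_i} for β ∈ Image(B). -/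
open MvPolynomial

/-!
The torus acts diagonally on monomials: `z^u w^v` is scaled by the character `t ↦ t^{A(u - v)}`,
and distinct characters of `(ℂ*)^d` are distinct functions (evaluate at `t = 2` in one coordinate).
Hence a polynomial is invariant iff every monomial in its support has `u - v ∈ Ker A = Image B`.
Such a monomial factors as `∏ (z_i w_i)^{min(u_i, v_i)} · f_{u - v}`.
-/

/-- The scaling action of the torus `T^d = (ℂ*)^d` on the variables of `ℂ[z, w]`:
`t · z_j = t^{a_j} z_j` and `t · w_j = t^{-a_j} w_j`. -/
noncomputable def scaleVars (d n : ℕ) (A : Matrix (Fin d) (Fin n) ℤ) (t : Fin d → ℂˣ) :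
    Fin n ⊕ Fin n → MvPolynomial (Fin n ⊕ Fin n) ℂ
  | Sum.inl j => C (∏ i : Fin d, ((t i : ℂ) ^ (A i j))) * X (Sum.inl j)
  | Sum.inr j => C (∏ i : Fin d, ((t i : ℂ) ^ (-(A i j)))) * X (Sum.inr j)

/-- The monomial `f_β = ∏_{β_i > 0} z_i^{β_i} ∏_{β_i < 0} w_i^{-β_i}`. -/
noncomputable def fBeta (n : ℕ) (β : Fin n → ℤ) : MvPolynomial (Fin n ⊕ Fin n) ℂ :=
  ∏ i : Fin n, X (Sum.inl i) ^ (β i).toNat * X (Sum.inr i) ^ (-(β i)).toNat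

theorem Finset.prod_zpow_eq_zpow_sum {G ι : Type*} [CommGroup G] (s : Finset ι) (f : ι → ℤ)
    (g : G) : ∏ i ∈ s, g ^ f i = g ^ ∑ i ∈ s, f i := by
  induction s using Finset.cons_induction with
  | empty => simp
  | cons a s ha ih => rw [Finset.sum_cons, Finset.prod_cons, zpow_add, ih]

theorem MvPolynomial.aeval_C_mul_X_monomial {R σ : Type*} [CommSemiring R] (c : σ → R)
    (s : σ →₀ ℕ) (a : R) :
    aeval (fun i => C (c i) * X i) (monomial s a) = monomial s (a * s.prod fun i k => c i ^ k) := by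
  simp only [monomial_eq, map_mul, map_finsuppProd, map_pow, aeval_C, aeval_X, algebraMap_eq,
    mul_pow, Finsupp.prod_mul]
  ring

theorem eq_zero_of_forall_prod_zpow_eq_one {ι : Type*} [Fintype ι] [DecidableEq ι] {e : ι → ℤ}
    (h : ∀ t : ι → ℂˣ, ∏ i, t i ^ e i = 1) : e = 0 := by
  funext i
  have h2 : (2 : ℂ) ^ e i = 1 := by
    simpa [Finset.prod_eq_single i, Pi.mulSingle_apply, Units.ext_iff] using
      h (Pi.mulSingle i (Units.mk0 2 two_ne_zero))
  have h2' : (2 : ℝ) ^ e i = 1 := Complex.ofReal_injective (by push_cast; exact h2)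
  exact (zpow_eq_one_iff_right₀ zero_le_two (by norm_num)).1 h2'

section TorusAction

variable {d n : ℕ}

/-- The exponent `u - v` of the torus weight of the monomial `z^u w^v`, written as `σ = (u, v)`. -/
def expDiff (σ : (Fin n ⊕ Fin n) →₀ ℕ) : Fin n → ℤ :=
  fun j => σ (Sum.inl j) - σ (Sum.inr j)

def varWeight {G : Type*} [CommGroup G] (A : Matrix (Fin d) (Fin n) ℤ) (t : Fin d → G) :
    Fin n ⊕ Fin n → G :=
  Sum.elim (fun j => ∏ i, t i ^ A i j) fun j => ∏ i, t i ^ (-A i j)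

theorem prod_varWeight_pow {G : Type*} [CommGroup G] (A : Matrix (Fin d) (Fin n) ℤ)
    (t : Fin d → G) (σ : (Fin n ⊕ Fin n) →₀ ℕ) :
    (σ.prod fun v k => varWeight A t v ^ k) = ∏ i, t i ^ A.mulVec (expDiff σ) i := by
  simp only [varWeight, Finsupp.prod_fintype _ _ (fun _ => pow_zero _), Fintype.prod_sum_type,
    Sum.elim_inl, Sum.elim_inr, ← Finset.prod_mul_distrib, Matrix.mulVec, dotProduct, expDiff,
    ← Finset.prod_zpow_eq_zpow_sum, ← Finset.prod_pow]
  rw [Finset.prod_comm]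
  refine Finset.prod_congr rfl fun j _ => Finset.prod_congr rfl fun i _ => ?_
  rw [mul_sub, zpow_sub, zpow_mul, zpow_mul, zpow_neg, inv_pow, zpow_natCast, zpow_natCast]

theorem scaleVars_eq (A : Matrix (Fin d) (Fin n) ℤ) (t : Fin d → ℂˣ) :
    scaleVars d n A t = fun v => C ((varWeight A t v : ℂˣ) : ℂ) * X v := by
  funext v
  cases v <;> simp [scaleVars, varWeight]

theorem aeval_scaleVars_monomial (A : Matrix (Fin d) (Fin n) ℤ) (t : Fin d → ℂˣ)
    (σ : (Fin n ⊕ Fin n) →₀ ℕ) (c : ℂ) :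
    aeval (scaleVars d n A t) (monomial σ c)
      = monomial σ (c * ((∏ i, t i ^ A.mulVec (expDiff σ) i : ℂˣ) : ℂ)) := by
  rw [scaleVars_eq, aeval_C_mul_X_monomial, ← prod_varWeight_pow, ← Units.coeHom_apply,
    map_finsuppProd]
  simp only [Units.coeHom_apply, Units.val_pow_eq_pow_val]

theorem coeff_aeval_scaleVars (A : Matrix (Fin d) (Fin n) ℤ) (t : Fin d → ℂˣ)
    (p : MvPolynomial (Fin n ⊕ Fin n) ℂ) (σ : (Fin n ⊕ Fin n) →₀ ℕ) :
    coeff σ (aeval (scaleVars d n A t) p)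
      = coeff σ p * ((∏ i, t i ^ A.mulVec (expDiff σ) i : ℂˣ) : ℂ) := by
  induction p using MvPolynomial.induction_on' with
  | monomial τ c =>
    rw [aeval_scaleVars_monomial, coeff_monomial, coeff_monomial]
    split_ifs with h
    · rw [h]
    · rw [zero_mul]
  | add p q hp hq => rw [map_add, coeff_add, coeff_add, hp, hq, add_mul]


noncomputable def torusInvariants (A : Matrix (Fin d) (Fin n) ℤ) :
    Subalgebra ℂ (MvPolynomial (Fin n ⊕ Fin n) ℂ) :=
  ⨅ t, AlgHom.equalizer (aeval (scaleVars d n A t)) (AlgHom.id ℂ _)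

theorem mem_torusInvariants {A : Matrix (Fin d) (Fin n) ℤ} {p : MvPolynomial (Fin n ⊕ Fin n) ℂ} :
    p ∈ torusInvariants A ↔ ∀ t, aeval (scaleVars d n A t) p = p := by
  simp [torusInvariants, Algebra.mem_iInf, AlgHom.mem_equalizer]

theorem mem_torusInvariants_iff_support {A : Matrix (Fin d) (Fin n) ℤ}
    {p : MvPolynomial (Fin n ⊕ Fin n) ℂ} :
    p ∈ torusInvariants A ↔ ∀ σ ∈ p.support, A.mulVec (expDiff σ) = 0 := by
  simp only [mem_torusInvariants, MvPolynomial.ext_iff (p := aeval _ p), coeff_aeval_scaleVars]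
  constructor
  · intro h σ hσ
    refine eq_zero_of_forall_prod_zpow_eq_one fun t => Units.ext ?_
    simpa using mul_left_cancel₀ (mem_support_iff.mp hσ) ((h t σ).trans (mul_one _).symm)
  · intro h t σ
    by_cases hσ : σ ∈ p.support
    · simp [h σ hσ]
    · simp [notMem_support_iff.mp hσ]

theorem monomial_mem_torusInvariants {A : Matrix (Fin d) (Fin n) ℤ} {σ : (Fin n ⊕ Fin n) →₀ ℕ}
    (h : A.mulVec (expDiff σ) = 0) (c : ℂ) : monomial σ c ∈ torusInvariants A := by
  refine mem_torusInvariants_iff_support.2 fun τ hτ => ?_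
  rw [Finset.mem_singleton.1 (support_monomial_subset hτ), h]

end TorusAction

section Monomials

variable {n : ℕ}

theorem monomial_one_eq_prod {R : Type*} [CommSemiring R] (σ : (Fin n ⊕ Fin n) →₀ ℕ) :
    monomial σ (1 : R) = ∏ i, X (Sum.inl i) ^ σ (Sum.inl i) * X (Sum.inr i) ^ σ (Sum.inr i) := by
  rw [monomial_eq, C_1, one_mul, Finsupp.prod_fintype _ _ (fun _ => pow_zero _),
    Fintype.prod_sum_type, Finset.prod_mul_distrib]

noncomputable def fBetaExp (β : Fin n → ℤ) : (Fin n ⊕ Fin n) →₀ ℕ :=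
  Finsupp.equivFunOnFinite.symm (Sum.elim (fun i => (β i).toNat) fun i => (-β i).toNat)

theorem fBeta_eq_monomial (β : Fin n → ℤ) : fBeta n β = monomial (fBetaExp β) 1 := by
  simp [monomial_one_eq_prod, fBeta, fBetaExp]

theorem expDiff_fBetaExp (β : Fin n → ℤ) : expDiff (fBetaExp β) = β := by
  funext i
  simp only [expDiff, fBetaExp, Finsupp.coe_equivFunOnFinite_symm, Sum.elim_inl, Sum.elim_inr]
  omega

theorem X_mul_X_eq_monomial {R : Type*} [CommSemiring R] (i : Fin n) :
    (X (Sum.inl i) * X (Sum.inr i) : MvPolynomial (Fin n ⊕ Fin n) R)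
      = monomial (Finsupp.single (Sum.inl i) 1 + Finsupp.single (Sum.inr i) 1) 1 := by
  rw [X, X, monomial_mul, one_mul]

theorem expDiff_single_add_single (i : Fin n) :
    expDiff (Finsupp.single (Sum.inl i) 1 + Finsupp.single (Sum.inr i) 1) = 0 := by
  funext j
  by_cases h : j = i <;> simp [expDiff, Finsupp.single_apply, h, eq_comm]

theorem pow_mul_pow_eq_mul_pow_min_mul {M : Type*} [CommMonoid M] (x y : M) (a b : ℕ) :
    x ^ a * y ^ b = (x * y) ^ min a b * (x ^ (a - b) * y ^ (b - a)) := by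
  rcases le_total a b with h | h
  · obtain ⟨c, rfl⟩ := exists_add_of_le h
    simp only [min_eq_left h, Nat.sub_eq_zero_of_le h, add_tsub_cancel_left, pow_zero, pow_add,
      mul_pow, one_mul]
    ac_rfl
  · obtain ⟨c, rfl⟩ := exists_add_of_le h
    simp only [min_eq_right h, Nat.sub_eq_zero_of_le h, add_tsub_cancel_left, pow_zero, pow_add,
      mul_pow, mul_one]
    ac_rfl

theorem monomial_one_eq_prod_mul_fBeta (σ : (Fin n ⊕ Fin n) →₀ ℕ) :
    monomial σ (1 : ℂ) =
      (∏ i, (X (Sum.inl i) * X (Sum.inr i)) ^ min (σ (Sum.inl i)) (σ (Sum.inr i))) *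
        fBeta n (expDiff σ) := by
  rw [monomial_one_eq_prod, fBeta, ← Finset.prod_mul_distrib]
  refine Finset.prod_congr rfl fun i _ => ?_
  have hz : (expDiff σ i).toNat = σ (Sum.inl i) - σ (Sum.inr i) := by simp only [expDiff]; omega
  have hw : (-expDiff σ i).toNat = σ (Sum.inr i) - σ (Sum.inl i) := by simp only [expDiff]; omega
  rw [hz, hw, pow_mul_pow_eq_mul_pow_min_mul]

end Monomials

section Generators

variable {d n : ℕ}

def zwGenerators (A : Matrix (Fin d) (Fin n) ℤ) : Set (MvPolynomial (Fin n ⊕ Fin n) ℂ) :=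
  Set.range (fun i : Fin n => X (Sum.inl i) * X (Sum.inr i)) ∪
    (fun β => fBeta n β) '' {v | A.mulVec v = 0}

theorem monomial_mem_adjoin_zwGenerators {A : Matrix (Fin d) (Fin n) ℤ}
    {σ : (Fin n ⊕ Fin n) →₀ ℕ} (h : A.mulVec (expDiff σ) = 0) (c : ℂ) :
    monomial σ c ∈ Algebra.adjoin ℂ (zwGenerators A) := by
  rw [← mul_one c, ← C_mul_monomial, monomial_one_eq_prod_mul_fBeta]
  refine mul_mem (Subalgebra.algebraMap_mem _ c) (mul_mem ?_ ?_)
  · exact Subalgebra.prod_mem _ fun i _ =>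
      pow_mem (Algebra.subset_adjoin (Set.mem_union_left _ (Set.mem_range_self i))) _
  · exact Algebra.subset_adjoin (Set.mem_union_right _ (Set.mem_image_of_mem _ h))

theorem torusInvariants_eq_adjoin (A : Matrix (Fin d) (Fin n) ℤ) :
    torusInvariants A = Algebra.adjoin ℂ (zwGenerators A) := by
  apply le_antisymm
  · intro p hp
    rw [← support_sum_monomial_coeff p]
    exact Subalgebra.sum_mem _ fun σ hσ =>
      monomial_mem_adjoin_zwGenerators (mem_torusInvariants_iff_support.1 hp σ hσ) _
  · refine Algebra.adjoin_le ?_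
    rintro _ (⟨i, rfl⟩ | ⟨β, hβ, rfl⟩)
    · dsimp only [SetLike.mem_coe]
      rw [X_mul_X_eq_monomial]
      exact monomial_mem_torusInvariants (by rw [expDiff_single_add_single, Matrix.mulVec_zero]) _
    · dsimp only [SetLike.mem_coe]
      rw [fBeta_eq_monomial]
      exact monomial_mem_torusInvariants (by rwa [expDiff_fBetaExp]) _

end Generators

theorem stmt_7_general (d n : ℕ) (A : Matrix (Fin d) (Fin n) ℤ) (B : Matrix (Fin n) (Fin (n - d)) ℤ)
    (hexact : Set.range B.mulVec = {v | A.mulVec v = 0}) :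
    {p : MvPolynomial (Fin n ⊕ Fin n) ℂ | ∀ t : Fin d → ℂˣ, aeval (scaleVars d n A t) p = p}
      = ↑(Algebra.adjoin ℂ
          ((Set.range fun i : Fin n =>
              (X (Sum.inl i) * X (Sum.inr i) : MvPolynomial (Fin n ⊕ Fin n) ℂ)) ∪
            ((fun β => fBeta n β) '' Set.range B.mulVec))) := by
  rw [hexact, ← zwGenerators, ← torusInvariants_eq_adjoin]
  exact Set.ext fun p => mem_torusInvariants.symm

/-- The invariant ring `ℂ[z,w]^{T^d}` equals the subalgebra generated by
`z_1 w_1, …, z_n w_n` together with the monomials `f_β` for `β ∈ Image B`. -/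
theorem stmt_7 (d n : ℕ) (A : Matrix (Fin d) (Fin n) ℤ) (B : Matrix (Fin n) (Fin (n - d)) ℤ)
    (hA : Function.Surjective A.mulVec)
    (hB : Function.Injective B.mulVec)
    (hexact : Set.range B.mulVec = {v | A.mulVec v = 0}) :
    {p : MvPolynomial (Fin n ⊕ Fin n) ℂ | ∀ t : Fin d → ℂˣ, aeval (scaleVars d n A t) p = p}
      = ↑(Algebra.adjoin ℂ
          ((Set.range fun i : Fin n =>
              (X (Sum.inl i) * X (Sum.inr i) : MvPolynomial (Fin n ⊕ Fin n) ℂ)) ∪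
            ((fun β => fBeta n β) '' Set.range B.mulVec))) :=
  stmt_7_general d n A B hexact
end

section
/- Any minor (determinant of any square submatrix) of an integer matrix all of whose columns are of the form ±e_i ± e_j (sums or differences of two distinct standard basis vectors, with arbitrary signs) is either 0 or ±2^ℓ for some integer ℓ ≥ 0. -/
/-!
Call an integer vector a signed edge if its entries lie in `{0, ±1}` and at most two of them
are nonzero; matrices whose columns are signed edges are closed under taking minors. For a
square such matrix `A`, look at its first row. If it has at most one nonzero entry, expand along
it. Otherwise it meets two columns `u` and `v`, and `v + s • u` with `s = ±1` kills the entry of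
`v` in the first row without changing `det A`. If `u` and `v` share no other row, the new column
is again a signed edge and the first row has lost a nonzero entry. If they share a second row
`i`, the new column is `d • e_i` with `|d| ≤ 2`; factoring out `d` leaves a column with a single
nonzero entry, along which we expand.
-/

open Matrix Finset

def signedPowersOfTwo : Submonoid ℤ where
  carrier := {d | d = 0 ∨ ∃ ℓ : ℕ, d = 2 ^ ℓ ∨ d = -2 ^ ℓ}
  one_mem' := Or.inr ⟨0, Or.inl (pow_zero 2).symm⟩
  mul_mem' := by
    rintro a b (rfl | ⟨k, rfl | rfl⟩) (rfl | ⟨l, rfl | rfl⟩) <;>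
      first
        | exact Or.inl (mul_zero _)
        | exact Or.inl (zero_mul _)
        | (refine Or.inr ⟨k + l, ?_⟩; rw [pow_add]; first | (left; ring1) | (right; ring1))

lemma mem_signedPowersOfTwo_of_abs_le_two {d : ℤ} (hd : |d| ≤ 2) : d ∈ signedPowersOfTwo := by
  obtain ⟨hlo, hhi⟩ := abs_le.mp hd
  interval_cases d
  exacts [Or.inr ⟨1, Or.inr rfl⟩, Or.inr ⟨0, Or.inr rfl⟩, Or.inl rfl, Or.inr ⟨0, Or.inl rfl⟩,
    Or.inr ⟨1, Or.inl rfl⟩]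

section SignedEdge

variable {m : Type*} [Fintype m]

structure IsSignedEdge (v : m → ℤ) : Prop where
  abs_le_one : ∀ i, |v i| ≤ 1
  card_support_le_two : #{i | v i ≠ 0} ≤ 2

namespace IsSignedEdge

variable {u v : m → ℤ}

lemma mul_self_eq_one (hv : IsSignedEdge v) {i : m} (hi : v i ≠ 0) : v i * v i = 1 := by
  obtain ⟨hlo, hhi⟩ := abs_le.mp (hv.abs_le_one i)
  interval_cases h : v i <;> simp_all

lemma eq_zero_of_ne (hv : IsSignedEdge v) {r i x : m} (hr : v r ≠ 0) (hi : v i ≠ 0)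
    (hri : r ≠ i) (hxr : x ≠ r) (hxi : x ≠ i) : v x = 0 := by
  by_contra hx
  refine (hv.card_support_le_two.trans_lt (two_lt_card.mpr ?_)).false
  exact ⟨r, by simpa, i, by simpa, x, by simpa, hri, hxr.symm, hxi.symm⟩

lemma comp {m' : Type*} [Fintype m'] (hv : IsSignedEdge v) {f : m' → m}
    (hf : Function.Injective f) : IsSignedEdge (v ∘ f) where
  abs_le_one i := hv.abs_le_one (f i)
  card_support_le_two :=
    (card_le_card_of_injOn f (fun i hi => by simpa using hi) hf.injOn).trans
      hv.card_support_le_two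

variable [DecidableEq m]

lemma add_smul_of_cancel (hu : IsSignedEdge u) (hv : IsSignedEdge v) {r : m} {s : ℤ}
    (hs : |s| ≤ 1) (hur : u r ≠ 0) (hvr : v r ≠ 0) (hdisj : ∀ x ≠ r, u x = 0 ∨ v x = 0)
    (hcancel : u r + s * v r = 0) : IsSignedEdge (u + s • v) where
  abs_le_one x := by
    by_cases hx : x = r
    · simp [hx, hcancel]
    rcases hdisj x hx with h | h
    · simpa [h, abs_mul] using mul_le_one₀ hs (abs_nonneg _) (hv.abs_le_one x)
    · simpa [h] using hu.abs_le_one x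
  card_support_le_two := by
    have hsub : ({x | (u + s • v) x ≠ 0} : Finset m) ⊆
        ({x | u x ≠ 0} : Finset m).erase r ∪ ({x | v x ≠ 0} : Finset m).erase r := by
      intro x hx
      by_cases hxr : x = r
      · simp_all
      by_cases hux : u x = 0 <;> simp_all
    have hu' := card_erase_of_mem (s := ({x | u x ≠ 0} : Finset m)) (by simpa using hur)
    have hv' := card_erase_of_mem (s := ({x | v x ≠ 0} : Finset m)) (by simpa using hvr)
    have := (card_le_card hsub).trans (card_union_le _ _)
    have := hu.card_support_le_two
    have := hv.card_support_le_two
    omega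

end IsSignedEdge

variable [DecidableEq m]

lemma isSignedEdge_single (i : m) : IsSignedEdge (Pi.single i (1 : ℤ)) where
  abs_le_one x := by by_cases hx : x = i <;> simp [hx]
  card_support_le_two := by
    refine (card_le_card (t := {i}) fun x hx => ?_).trans (by simp)
    by_contra h
    simp_all

lemma isSignedEdge_smul_single_add_smul_single {i j : m} (hij : i ≠ j) {ε ε' : ℤ}
    (hε : |ε| ≤ 1) (hε' : |ε'| ≤ 1) :
    IsSignedEdge (ε • Pi.single i 1 + ε' • Pi.single j 1 : m → ℤ) where
  abs_le_one x := by
    by_cases hxi : x = i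
    · simp [hxi, hij, hε]
    by_cases hxj : x = j
    · simp [hxj, hij.symm, hε']
    · simp [hxi, hxj]
  card_support_le_two := by
    refine (card_le_card (t := {i, j}) fun x hx => ?_).trans card_le_two
    by_contra h
    simp_all

end SignedEdge

section SignedIncidence

variable {m n : Type*} [Fintype m]

/-- Incidence matrices of signed graphs, with half-edges and loose edges allowed. -/
def IsSignedIncidence (A : Matrix m n ℤ) : Prop :=
  ∀ j, IsSignedEdge fun i => A i j

namespace IsSignedIncidence

variable {A : Matrix m n ℤ}

lemma submatrix (hA : IsSignedIncidence A) {k l : Type*} [Fintype k] {f : k → m}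
    (hf : Function.Injective f) (g : l → n) : IsSignedIncidence (A.submatrix f g) :=
  fun j => (hA (g j)).comp hf

lemma updateCol [DecidableEq n] (hA : IsSignedIncidence A) {j : n} {v : m → ℤ}
    (hv : IsSignedEdge v) :
    IsSignedIncidence (A.updateCol j v) := by
  intro j'
  by_cases h : j' = j
  · subst h; simpa using hv
  · simpa [updateCol_ne h] using hA j'

end IsSignedIncidence

lemma IsSignedIncidence.exists_reduce [DecidableEq m] {A : Matrix m m ℤ}
    (hA : IsSignedIncidence A) {r c c' : m} (hcc' : c ≠ c') (hc : A r c ≠ 0)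
    (hc' : A r c' ≠ 0) :
    (∃ B : Matrix m m ℤ, IsSignedIncidence B ∧ B.det = A.det ∧
      #{x | B r x ≠ 0} < #{x | A r x ≠ 0}) ∨
    ∃ (d : ℤ) (C : Matrix m m ℤ) (i : m), |d| ≤ 2 ∧ IsSignedIncidence C ∧
      A.det = d * C.det ∧ ∀ x ≠ i, C x c' = 0 := by
  obtain ⟨s, hs⟩ : ∃ s, s = -(A r c' * A r c) := ⟨_, rfl⟩
  obtain ⟨w, hw⟩ : ∃ w : m → ℤ, w = fun x => A x c' + s • A x c := ⟨_, rfl⟩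
  have hwx (x : m) : w x = A x c' + s * A x c := by simp [hw]
  have hdet : (A.updateCol c' w).det = A.det := hw ▸ det_updateCol_add_smul_self A hcc'.symm s
  have hs_abs : |s| ≤ 1 := by
    simpa [hs, abs_mul] using
      mul_le_one₀ ((hA c').abs_le_one r) (abs_nonneg _) ((hA c).abs_le_one r)
  have hwr : w r = 0 := by
    rw [hwx, hs]
    linear_combination (-A r c') * (hA c).mul_self_eq_one hc
  by_cases hdisj : ∀ x ≠ r, A x c' = 0 ∨ A x c = 0
  · have hwe : IsSignedEdge w :=
      hw ▸ (hA c').add_smul_of_cancel (hA c) hs_abs hc' hc hdisj (by simpa [hwx] using hwr)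
    refine Or.inl ⟨_, hA.updateCol hwe, hdet,
      lt_of_le_of_lt (card_le_card fun x hx => ?_) (card_erase_lt_of_mem (a := c') ?_)⟩
    · by_cases hx' : x = c' <;> simp_all
    · simpa using hc'
  push Not at hdisj
  obtain ⟨i, hir, hic', hic⟩ := hdisj
  have hwi : w = w i • Pi.single i 1 := by
    funext x
    by_cases hxi : x = i
    · simp [hxi]
    by_cases hxr : x = r
    · simp [hxr, hwr, hir.symm]
    simp [hwx, hxi, (hA c).eq_zero_of_ne hc hic hir.symm hxr hxi,
      (hA c').eq_zero_of_ne hc' hic' hir.symm hxr hxi]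
  refine Or.inr ⟨w i, A.updateCol c' (Pi.single i 1), i, ?_,
    hA.updateCol (isSignedEdge_single i), by rw [← hdet, hwi, det_updateCol_smul]; simp,
    fun x hx => by simp [hx]⟩
  calc |w i| ≤ |A i c'| + |s| * |A i c| := hwx i ▸ abs_mul s _ ▸ abs_add_le _ _
    _ ≤ 1 + 1 * 1 := by gcongr; exacts [(hA c').abs_le_one i, (hA c).abs_le_one i]
    _ = 2 := by norm_num

end SignedIncidence

section Laplace

variable {R : Type*} [CommRing R] {k : ℕ} {A : Matrix (Fin (k + 1)) (Fin (k + 1)) R}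
  {r c : Fin (k + 1)}

lemma det_succ_column_of_forall_ne (h : ∀ x ≠ r, A x c = 0) :
    A.det = (-1) ^ (r + c : ℕ) * A r c * (A.submatrix r.succAbove c.succAbove).det := by
  rw [det_succ_column A c, Fintype.sum_eq_single r fun x hx => by simp [h x hx]]

lemma det_succ_row_of_forall_ne (h : ∀ y ≠ c, A r y = 0) :
    A.det = (-1) ^ (r + c : ℕ) * A r c * (A.submatrix r.succAbove c.succAbove).det := by
  rw [det_succ_row A r, Fintype.sum_eq_single c fun y hy => by simp [h y hy]]

end Laplace

namespace IsSignedIncidence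

variable {k : ℕ} {A : Matrix (Fin (k + 1)) (Fin (k + 1)) ℤ}

lemma cofactor_mem_signedPowersOfTwo (hA : IsSignedIncidence A)
    (hminor : ∀ B : Matrix (Fin k) (Fin k) ℤ, IsSignedIncidence B → B.det ∈ signedPowersOfTwo)
    (r c : Fin (k + 1)) :
    (-1) ^ (r + c : ℕ) * A r c * (A.submatrix r.succAbove c.succAbove).det ∈
      signedPowersOfTwo :=
  mul_mem (mul_mem (pow_mem (mem_signedPowersOfTwo_of_abs_le_two (by simp)) _)
    (mem_signedPowersOfTwo_of_abs_le_two (((hA c).abs_le_one r).trans one_le_two)))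
    (hminor _ (hA.submatrix Fin.succAbove_right_injective _))

theorem det_mem_signedPowersOfTwo :
    ∀ {k : ℕ} {A : Matrix (Fin k) (Fin k) ℤ}, IsSignedIncidence A → A.det ∈ signedPowersOfTwo
  | 0, _, _ => by simp
  | k + 1, A, hA => by
    have hminor (B : Matrix (Fin k) (Fin k) ℤ) (hB : IsSignedIncidence B) :
        B.det ∈ signedPowersOfTwo := det_mem_signedPowersOfTwo hB
    induction hn : #{c | A 0 c ≠ 0} using Nat.strong_induction_on generalizing A with
    | _ n ih =>
    obtain hempty | hne := ({c | A 0 c ≠ 0} : Finset (Fin (k + 1))).eq_empty_or_nonempty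
    · rw [det_eq_zero_of_row_eq_zero 0 fun c => by
        simpa using filter_eq_empty_iff.mp hempty (mem_univ c)]
      exact mem_signedPowersOfTwo_of_abs_le_two (by simp)
    obtain ⟨c, hc⟩ | ⟨c, hc, c', hc', hcc'⟩ := hne.exists_eq_singleton_or_nontrivial
    · rw [det_succ_row_of_forall_ne (r := 0) (c := c) fun y hy => by
        by_contra h
        have : y ∈ ({c} : Finset (Fin (k + 1))) := hc ▸ mem_filter.mpr ⟨mem_univ y, h⟩
        exact hy (mem_singleton.mp this)]
      exact hA.cofactor_mem_signedPowersOfTwo hminor 0 c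
    replace hc : A 0 c ≠ 0 := by simpa using hc
    replace hc' : A 0 c' ≠ 0 := by simpa using hc'
    obtain ⟨B, hB, hdet, hlt⟩ | ⟨d, C, i, hd, hC, hdet, hCi⟩ := hA.exists_reduce hcc' hc hc'
    · exact hdet ▸ ih _ (hn ▸ hlt) B hB rfl
    · rw [hdet, det_succ_column_of_forall_ne hCi]
      exact mul_mem (mem_signedPowersOfTwo_of_abs_le_two hd)
        (hC.cofactor_mem_signedPowersOfTwo hminor i c')

end IsSignedIncidence

theorem stmt_11_general (m N : ℕ) (M : Matrix (Fin m) (Fin N) ℤ)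
    (hcol : ∀ c : Fin N, ∃ i j : Fin m, ∃ ε ε' : ℤ, i ≠ j ∧
      (ε = 1 ∨ ε = -1) ∧ (ε' = 1 ∨ ε' = -1) ∧
      (fun r => M r c) = ε • Pi.single i (1 : ℤ) + ε' • Pi.single j 1)
    (k : ℕ) (f : Fin k → Fin m) (g : Fin k → Fin N)
    (hf : Function.Injective f) :
    (M.submatrix f g).det = 0 ∨
      ∃ ℓ : ℕ, (M.submatrix f g).det = 2 ^ ℓ ∨ (M.submatrix f g).det = -(2 ^ ℓ) := by
  have hM : IsSignedIncidence M := fun c => by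
    obtain ⟨i, j, ε, ε', hij, hε, hε', hc⟩ := hcol c
    rw [hc]
    exact isSignedEdge_smul_single_add_smul_single hij (by rcases hε with rfl | rfl <;> simp)
      (by rcases hε' with rfl | rfl <;> simp)
  exact IsSignedIncidence.det_mem_signedPowersOfTwo (hM.submatrix hf g)

/-- Any minor of an integer matrix all of whose columns have the form `±e_i ± e_j`
(with `i ≠ j`) is `0` or `±2^ℓ` for some `ℓ ≥ 0`. -/
theorem stmt_11 (m N : ℕ) (M : Matrix (Fin m) (Fin N) ℤ)
    (hcol : ∀ c : Fin N, ∃ i j : Fin m, ∃ ε ε' : ℤ, i ≠ j ∧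
      (ε = 1 ∨ ε = -1) ∧ (ε' = 1 ∨ ε' = -1) ∧
      (fun r => M r c) = ε • Pi.single i (1 : ℤ) + ε' • Pi.single j 1)
    (k : ℕ) (f : Fin k → Fin m) (g : Fin k → Fin N)
    (hf : Function.Injective f) (hg : Function.Injective g) :
    (M.submatrix f g).det = 0 ∨
      ∃ ℓ : ℕ, (M.submatrix f g).det = 2 ^ ℓ ∨ (M.submatrix f g).det = -(2 ^ ℓ) :=
  stmt_11_general m N M hcol k f g hf
end

section
/- Let B be an n×2 unimodular integer matrix (all 2×2 minors in {0,±1}) of rank 2 with no zero rows and no two rows equal up to sign. Then, up to elementary column operations over ℤ, permuting rows, and multiplying rows by −1, B is one of exactly two matrices: the matrix with rows (1,0),(0,1), or the matrix with rows (1,0),(0,1),(1,1). -/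
/-!
Because `B` has rank 2, some two rows `i₀, i₁` form a `2 × 2` matrix `Q` with determinant `±1`.
Then `C = B Q⁻¹` has rows `(1, 0)` and `(0, 1)` at `i₀, i₁`, and its `2 × 2` minors agree with
those of `B` up to sign. The minors of a row of `C` with these two rows are its entries, so every
other row is `(±1, ±1)`: it is not zero and not `±(1, 0)`, `±(0, 1)`. Two such rows are equal up
to sign or have minor `±2`, so `C` has two or three rows, and the number of rows tells the two
normal forms apart.
-/

/-- `B` is equivalent to `T` via elementary column operations over `ℤ` (right
multiplication by a matrix of determinant `±1`), row permutations (a bijection of the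
row indices), and row sign changes. -/
def RowColEquiv2 {n k : ℕ} (B : Matrix (Fin n) (Fin 2) ℤ) (T : Matrix (Fin k) (Fin 2) ℤ) : Prop :=
  ∃ (e : Fin n ≃ Fin k) (ε : Fin n → ℤ) (Q : Matrix (Fin 2) (Fin 2) ℤ),
    (∀ i, ε i = 1 ∨ ε i = -1) ∧ (Q.det = 1 ∨ Q.det = -1) ∧
    B = Matrix.diagonal ε * (T.submatrix e id) * Q

open Matrix

namespace Matrix

variable {m n R : Type*}

theorem rank_le_one_of_det_submatrix_eq_zero [CommRing R] [IsDomain R] (B : Matrix m (Fin 2) R)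
    (h : ∀ f : Fin 2 → m, (B.submatrix f id).det = 0) : B.rank ≤ 1 := by
  by_cases hB : B = 0
  · simp [hB]
  obtain ⟨i, k, hik⟩ : ∃ i k, B i k ≠ 0 := by
    by_contra! h0
    exact hB (ext h0)
  have hsmul : B i k • B = vecMulVec (fun j => B j k) (B i) := by
    ext j l
    have hij := h ![i, j]
    have hji := h ![j, i]
    simp only [det_fin_two, submatrix_apply, id_eq, cons_val_zero, cons_val_one] at hij hji
    fin_cases k <;> fin_cases l <;>
      simp only [Fin.zero_eta, Fin.mk_one, smul_apply, vecMulVec_apply, smul_eq_mul] <;> grind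
  rw [← rank_smul_of_mem_nonZeroDivisors B (mem_nonZeroDivisors_of_ne_zero hik), hsmul]
  exact rank_vecMulVec_le _ _

theorem det_submatrix_eq_zero_of_not_injective [CommRing R] [Fintype n] [DecidableEq n]
    (B : Matrix m n R) {f : n → m} (hf : ¬Function.Injective f) :
    (B.submatrix f id).det = 0 := by
  obtain ⟨a, b, hab, hne⟩ := Function.not_injective_iff.mp hf
  exact det_zero_of_row_eq hne (by ext; simp [hab])

theorem det_submatrix_mul [CommRing R] [Fintype n] [DecidableEq n]
    (B : Matrix m n R) (Q : Matrix n n R) (f : n → m) :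
    ((B * Q).submatrix f id).det = (B.submatrix f id).det * Q.det := by
  rw [submatrix_mul _ _ _ id _ Function.bijective_id, submatrix_id_id, det_mul]

theorem exists_mul_eq_and_submatrix_eq_one [CommRing R] [Fintype n] [DecidableEq n]
    (B : Matrix m n R) {f : n → m} (hf : IsUnit (B.submatrix f id).det) :
    ∃ (C : Matrix m n R) (Q : Matrix n n R), IsUnit Q.det ∧ B = C * Q ∧ C.submatrix f id = 1 := by
  refine ⟨B * (B.submatrix f id)⁻¹, B.submatrix f id, hf,
    (nonsing_inv_mul_cancel_right _ _ hf).symm, ?_⟩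
  rw [submatrix_mul _ _ _ id _ Function.bijective_id, submatrix_id_id, mul_nonsing_inv _ hf]

theorem abs_det_submatrix_mul_of_isUnit [Fintype n] [DecidableEq n] {C : Matrix m n ℤ}
    {Q : Matrix n n ℤ} (hQ : IsUnit Q.det) (g : n → m) :
    |((C * Q).submatrix g id).det| = |(C.submatrix g id).det| := by
  rw [det_submatrix_mul, abs_mul, Int.isUnit_iff_abs_eq.mp hQ, mul_one]

end Matrix

namespace RowColEquiv2

variable {n k : ℕ} {B : Matrix (Fin n) (Fin 2) ℤ} {T : Matrix (Fin k) (Fin 2) ℤ}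

theorem card_eq (h : RowColEquiv2 B T) : n = k := by
  obtain ⟨e, -⟩ := h
  exact Fin.equiv_iff_eq.mp ⟨e⟩

theorem mul_right (h : RowColEquiv2 B T) {Q : Matrix (Fin 2) (Fin 2) ℤ} (hQ : IsUnit Q.det) :
    RowColEquiv2 (B * Q) T := by
  obtain ⟨e, ε, P, hε, hP, rfl⟩ := h
  refine ⟨e, ε, P * Q, hε, ?_, by rw [Matrix.mul_assoc]⟩
  rw [det_mul, ← Int.isUnit_iff]
  exact (Int.isUnit_iff.mpr hP).mul hQ

theorem of_submatrix_eq (e : Fin k ≃ Fin n) {ε : Fin k → ℤ} (hε : ∀ i, IsUnit (ε i))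
    {Q : Matrix (Fin 2) (Fin 2) ℤ} (hQ : IsUnit Q.det)
    (h : B.submatrix e id = diagonal ε * T * Q) : RowColEquiv2 B T := by
  refine ⟨e.symm, ε ∘ e.symm, Q, fun i => Int.isUnit_iff.mp (hε _), Int.isUnit_iff.mp hQ, ?_⟩
  have := congrArg (·.submatrix e.symm id) h
  simp only [submatrix_submatrix, Equiv.self_comp_symm, Function.comp_id, submatrix_id_id] at this
  rw [this, submatrix_mul _ _ _ id _ Function.bijective_id,
    submatrix_mul _ _ _ e.symm _ e.symm.bijective, submatrix_id_id, submatrix_diagonal_equiv]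

end RowColEquiv2

section NormalForm

variable {n : ℕ} {C : Matrix (Fin n) (Fin 2) ℤ} {f : Fin 2 → Fin n}

theorem abs_apply_le_one_of_submatrix_eq_one (hC : C.submatrix f id = 1)
    (hunim : ∀ g : Fin 2 → Fin n, |(C.submatrix g id).det| ≤ 1) (i : Fin n) :
    |C i 0| ≤ 1 ∧ |C i 1| ≤ 1 := by
  have hrow a b : C (f a) b = (1 : Matrix (Fin 2) (Fin 2) ℤ) a b := congrFun₂ hC a b
  have h0 := hunim ![i, f 1]
  have h1 := hunim ![f 0, i]
  simp only [det_fin_two, submatrix_apply, id_eq, cons_val_zero, cons_val_one] at h0 h1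
  simpa [hrow] using And.intro h0 h1

theorem abs_apply_eq_one_of_submatrix_eq_one (hC : C.submatrix f id = 1)
    (hunim : ∀ g : Fin 2 → Fin n, |(C.submatrix g id).det| ≤ 1) (hnz : ∀ i, C i ≠ 0)
    (hns : Pairwise fun i j => C i ≠ C j ∧ C i ≠ -C j) {i : Fin n} (h0 : i ≠ f 0)
    (h1 : i ≠ f 1) : |C i 0| = 1 ∧ |C i 1| = 1 := by
  have hrow a b : C (f a) b = (1 : Matrix (Fin 2) (Fin 2) ℤ) a b := congrFun₂ hC a b
  have hle := abs_apply_le_one_of_submatrix_eq_one hC hunim i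
  have hi := hnz i
  have hi0 := hns h0
  have hi1 := hns h1
  simp only [ne_eq, funext_iff, Fin.forall_fin_two, Pi.neg_apply, Pi.zero_apply, hrow,
    one_apply_eq, one_apply_ne, zero_ne_one, one_ne_zero, not_false_eq_true, neg_zero] at hi hi0 hi1
  rw [abs_le, abs_le] at hle
  rw [abs_eq zero_le_one, abs_eq zero_le_one]
  omega

theorem eq_of_submatrix_eq_one (hC : C.submatrix f id = 1)
    (hunim : ∀ g : Fin 2 → Fin n, |(C.submatrix g id).det| ≤ 1) (hnz : ∀ i, C i ≠ 0)
    (hns : Pairwise fun i j => C i ≠ C j ∧ C i ≠ -C j) {i j : Fin n} (hi0 : i ≠ f 0)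
    (hi1 : i ≠ f 1) (hj0 : j ≠ f 0) (hj1 : j ≠ f 1) : i = j := by
  by_contra hij
  obtain ⟨hi0, hi1⟩ := abs_apply_eq_one_of_submatrix_eq_one hC hunim hnz hns hi0 hi1
  obtain ⟨hj0, hj1⟩ := abs_apply_eq_one_of_submatrix_eq_one hC hunim hnz hns hj0 hj1
  have hdet := hunim ![i, j]
  have hij := hns hij
  simp only [det_fin_two, submatrix_apply, id_eq, cons_val_zero, cons_val_one] at hdet
  simp only [ne_eq, funext_iff, Fin.forall_fin_two, Pi.neg_apply] at hij
  rw [abs_le] at hdet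
  rw [abs_eq zero_le_one] at hi0 hi1 hj0 hj1
  rcases hi0 with h₁ | h₁ <;> rcases hi1 with h₂ | h₂ <;> rcases hj0 with h₃ | h₃ <;>
    rcases hj1 with h₄ | h₄ <;> rw [h₁, h₂, h₃, h₄] at hdet hij <;> omega

theorem rowColEquiv2_of_submatrix_eq_one (hC : C.submatrix f id = 1)
    (hunim : ∀ g : Fin 2 → Fin n, |(C.submatrix g id).det| ≤ 1) (hnz : ∀ i, C i ≠ 0)
    (hns : Pairwise fun i j => C i ≠ C j ∧ C i ≠ -C j) :
    RowColEquiv2 C (1 : Matrix (Fin 2) (Fin 2) ℤ) ∨ RowColEquiv2 C !![1, 0; 0, 1; 1, 1] := by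
  have hrow a b : C (f a) b = (1 : Matrix (Fin 2) (Fin 2) ℤ) a b := congrFun₂ hC a b
  have hf : Function.Injective f := by
    by_contra hf
    simpa [hC] using det_submatrix_eq_zero_of_not_injective C hf
  by_cases hsurj : Function.Surjective f
  · left
    refine RowColEquiv2.of_submatrix_eq (.ofBijective f ⟨hf, hsurj⟩) (fun _ => isUnit_one)
      (Q := 1) (by simp) ?_
    rwa [diagonal_one, Matrix.mul_one, Matrix.mul_one]
  right
  obtain ⟨i₂, hi₂⟩ := not_forall.mp hsurj
  have h0 : i₂ ≠ f 0 := fun h => hi₂ ⟨0, h.symm⟩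
  have h1 : i₂ ≠ f 1 := fun h => hi₂ ⟨1, h.symm⟩
  obtain ⟨hs, ht⟩ := abs_apply_eq_one_of_submatrix_eq_one hC hunim hnz hns h0 h1
  set s := C i₂ 0
  set t := C i₂ 1
  have hg : Function.Bijective ![f 0, f 1, i₂] := by
    refine ⟨?_, fun i => ?_⟩
    · intro a b hab
      fin_cases a <;> fin_cases b <;> simp_all [hf.eq_iff, eq_comm]
    · by_cases hi0 : i = f 0
      · exact ⟨0, hi0.symm⟩
      by_cases hi1 : i = f 1
      · exact ⟨1, hi1.symm⟩
      exact ⟨2, by simpa using eq_of_submatrix_eq_one hC hunim hnz hns h0 h1 hi0 hi1⟩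
  -- Scaling the second column by `s * t` and the rows by `(1, s * t, s)` turns the rows
  -- `(1, 0), (0, 1), (1, 1)` into `(1, 0), (0, 1), (s, t)`.
  have hs' := Int.isUnit_iff_abs_eq.mpr hs
  have ht' := Int.isUnit_iff_abs_eq.mpr ht
  refine RowColEquiv2.of_submatrix_eq (.ofBijective _ hg) (ε := ![1, s * t, s]) ?_
    (Q := !![1, 0; 0, s * t]) (by simpa using hs'.mul ht') ?_
  · intro a
    fin_cases a
    exacts [isUnit_one, hs'.mul ht', hs']
  · have hs2 : s * s = 1 := by rw [← abs_mul_abs_self, hs, one_mul]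
    have ht2 : t * t = 1 := by rw [← abs_mul_abs_self, ht, one_mul]
    ext a b
    fin_cases a <;> fin_cases b <;> simp [hrow, mul_apply, Fin.sum_univ_succ, s, t] <;> grind

end NormalForm

theorem existsUnique_fin_two_ite_iff {p q : Prop} :
    (∃! c : Fin 2, if c = 0 then p else q) ↔ Xor p q := by
  simp [ExistsUnique, Fin.exists_fin_two, Fin.forall_fin_two, Xor]

/-- Classification of rank-2 unimodular integer matrices with two columns, no zero rows
and no two rows equal up to sign: up to column operations over `ℤ`, row permutations and
row sign changes, `B` is exactly one of the matrix with rows `(1,0),(0,1)` and the matrix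
with rows `(1,0),(0,1),(1,1)`. -/
theorem stmt_13 (n : ℕ) (B : Matrix (Fin n) (Fin 2) ℤ)
    (hrank : B.rank = 2)
    (hunim : ∀ f : Fin 2 → Fin n, Function.Injective f →
      (B.submatrix f id).det ∈ ({0, 1, -1} : Set ℤ))
    (hnz : ∀ i, (fun j => B i j) ≠ 0)
    (hns : ∀ i j : Fin n, i ≠ j →
      (fun k => B i k) ≠ (fun k => B j k) ∧ (fun k => B i k) ≠ (fun k => -B j k)) :
    ∃! c : Fin 2,
      if c = 0 then RowColEquiv2 B (1 : Matrix (Fin 2) (Fin 2) ℤ)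
      else RowColEquiv2 B (!![1, 0; 0, 1; 1, 1] : Matrix (Fin 3) (Fin 2) ℤ) := by
  have hminor : ∀ g : Fin 2 → Fin n, |(B.submatrix g id).det| ≤ 1 := by
    intro g
    by_cases hg : Function.Injective g
    · rcases hunim g hg with h | h | h <;> simp_all
    · simp [det_submatrix_eq_zero_of_not_injective B hg]
  obtain ⟨f, hf⟩ : ∃ f : Fin 2 → Fin n, (B.submatrix f id).det ≠ 0 := by
    by_contra! h
    have := rank_le_one_of_det_submatrix_eq_zero B h
    omega
  obtain ⟨C, Q, hQ, rfl, hC⟩ := exists_mul_eq_and_submatrix_eq_one B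
    (Int.isUnit_iff_abs_eq.mpr (le_antisymm (hminor f) (Int.one_le_abs hf)))
  have hC₃ := rowColEquiv2_of_submatrix_eq_one hC
    (fun g => by rw [← abs_det_submatrix_mul_of_isUnit hQ]; exact hminor g)
    (fun i hi => hnz i (by rw [mul_apply_eq_vecMul, hi, zero_vecMul]))
    (fun i j hij => ⟨fun h => (hns i j hij).1 (by simp [mul_apply_eq_vecMul, h]),
      fun h => (hns i j hij).2 (by simp [mul_apply_eq_vecMul, h, neg_vecMul])⟩)
  rw [existsUnique_fin_two_ite_iff, xor_iff_or_and_not_and]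
  refine ⟨hC₃.imp (·.mul_right hQ) (·.mul_right hQ), fun ⟨h₂, h₃⟩ => ?_⟩
  have := h₂.card_eq.symm.trans h₃.card_eq
  omega
end

section
/- Over a finite field 𝔽_p, the number of tuples (x_1,…,x_{ℓ_1}, y_1,…,y_{ℓ_2}, z_1,…,z_{ℓ_3}) ∈ 𝔽_p^{ℓ_1+ℓ_2+ℓ_3} with all x_i distinct, all y_j distinct, all z_k distinct, and x_i + y_j + z_k ≠ 0 for all i,j,k, equals p^2 times the number of tuples (x'_1,…,x'_{ℓ_1−1}, y'_1,…,y'_{ℓ_2−1}, z'_1,…,z'_{ℓ_3}) ∈ 𝔽_p^{ℓ_1+ℓ_2+ℓ_3−2} satisfying: all x'_i nonzero and pairwise distinct, all y'_j nonzero and pairwise distinct, all z'_k nonzero and pairwise distinct, x'_i + z'_k ≠ 0, y'_j + z'_k ≠ 0, and x'_i + y'_j + z'_k ≠ 0 for all applicable indices. -/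
/-!
Translating the three tuples by `a`, `b` and `-(a + b)` preserves injectivity and every sum
`x i + y j + z k`, so each zero-sum-free triple is obtained in exactly one way from a triple with
`x 0 = y 0 = 0` and a shift `(a, b) ∈ G²`. With `x 0 = y 0 = 0`, the sum conditions at the indices
`0` become `z k ≠ 0`, `x i + z k ≠ 0` and `y j + z k ≠ 0`, and injectivity of `x` and `y` becomes
injectivity of their remaining entries together with their being nonzero.
-/

open Function

variable {G : Type*} [AddCommGroup G]

def ZeroSumFree {α β γ : Type*} (x : α → G) (y : β → G) (z : γ → G) : Prop :=
  Injective x ∧ Injective y ∧ Injective z ∧ ∀ i j k, x i + y j + z k ≠ 0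

def ZeroSumFreeReduced {m n : ℕ} {γ : Type*} (x : Fin m → G) (y : Fin n → G) (z : γ → G) :
    Prop :=
  (∀ i, x i ≠ 0) ∧ Injective x ∧ (∀ j, y j ≠ 0) ∧ Injective y ∧ (∀ k, z k ≠ 0) ∧ Injective z ∧
    (∀ i k, x i + z k ≠ 0) ∧ (∀ j k, y j + z k ≠ 0) ∧ (∀ i j k, x i + y j + z k ≠ 0)

theorem injective_add_const_iff {α : Type*} (x : α → G) (a : G) :
    Injective (x + const α a) ↔ Injective x :=
  ⟨fun h _ _ hij => h (congrArg (· + a) hij), (add_left_injective a).comp⟩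

theorem zeroSumFree_add_const_iff {α β γ : Type*} (x : α → G) (y : β → G) (z : γ → G)
    {a b c : G} (habc : a + b + c = 0) :
    ZeroSumFree (x + const α a) (y + const β b) (z + const γ c) ↔ ZeroSumFree x y z := by
  have hsum : ∀ i j k, x i + a + (y j + b) + (z k + c) = x i + y j + z k := fun i j k => by
    rw [← sub_eq_zero, ← habc]; abel
  simp only [ZeroSumFree, Pi.add_apply, const_apply, hsum, injective_add_const_iff]

theorem zeroSumFree_cons_zero_iff {m n : ℕ} {γ : Type*} (x : Fin m → G) (y : Fin n → G)
    (z : γ → G) :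
    ZeroSumFree (Fin.cons 0 x : Fin (m + 1) → G) (Fin.cons 0 y) z ↔ ZeroSumFreeReduced x y z := by
  simp only [ZeroSumFree, ZeroSumFreeReduced, Fin.cons_injective_iff, Fin.forall_fin_succ,
    Fin.cons_zero, Fin.cons_succ, zero_add, add_zero, Set.mem_range, not_exists, forall_and, ne_eq]
  tauto

def consZeroAddConstEquiv (m n : ℕ) (γ : Type*) :
    ((Fin m → G) × (Fin n → G) × (γ → G)) × (G × G) ≃
      (Fin (m + 1) → G) × (Fin (n + 1) → G) × (γ → G) where
  toFun w := (Fin.cons 0 w.1.1 + const _ w.2.1, Fin.cons 0 w.1.2.1 + const _ w.2.2,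
    w.1.2.2 + const γ (-(w.2.1 + w.2.2)))
  invFun t := ((fun i => t.1 i.succ - t.1 0, fun j => t.2.1 j.succ - t.2.1 0,
    t.2.2 + const γ (t.1 0 + t.2.1 0)), (t.1 0, t.2.1 0))
  left_inv w := by ext <;> simp; abel
  right_inv t := by
    ext i
    · cases i using Fin.cases <;> simp
    · cases i using Fin.cases <;> simp
    · simp; abel

theorem card_zeroSumFree (m n : ℕ) (γ : Type*) :
    Nat.card {t : (Fin (m + 1) → G) × (Fin (n + 1) → G) × (γ → G) //
        ZeroSumFree t.1 t.2.1 t.2.2} =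
      Nat.card G ^ 2 * Nat.card {v : (Fin m → G) × (Fin n → G) × (γ → G) //
        ZeroSumFreeReduced v.1 v.2.1 v.2.2} := by
  have hred : ∀ w : ((Fin m → G) × (Fin n → G) × (γ → G)) × (G × G),
      ZeroSumFreeReduced w.1.1 w.1.2.1 w.1.2.2 ↔
        ZeroSumFree (consZeroAddConstEquiv m n γ w).1 (consZeroAddConstEquiv m n γ w).2.1
          (consZeroAddConstEquiv m n γ w).2.2 := fun w => by
    rw [consZeroAddConstEquiv, Equiv.coe_fn_mk, zeroSumFree_add_const_iff _ _ _ (by abel),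
      zeroSumFree_cons_zero_iff]
  calc _ = Nat.card ({v : (Fin m → G) × (Fin n → G) × (γ → G) //
          ZeroSumFreeReduced v.1 v.2.1 v.2.2} × (G × G)) :=
        Nat.card_congr (((consZeroAddConstEquiv m n γ).subtypeEquiv hred).symm.trans
          Equiv.prodSubtypeFstEquivSubtypeProd)
    _ = _ := by rw [Nat.card_prod, Nat.card_prod, sq, mul_comm]

theorem stmt_15_general (p ℓ₁ ℓ₂ ℓ₃ : ℕ)
    (h₁ : 0 < ℓ₁) (h₂ : 0 < ℓ₂) :
    Nat.card {xyz : (Fin ℓ₁ → ZMod p) × (Fin ℓ₂ → ZMod p) × (Fin ℓ₃ → ZMod p) //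
        Function.Injective xyz.1 ∧ Function.Injective xyz.2.1 ∧ Function.Injective xyz.2.2 ∧
        ∀ i j k, xyz.1 i + xyz.2.1 j + xyz.2.2 k ≠ 0} =
    p ^ 2 * Nat.card {x : (Fin (ℓ₁ - 1) → ZMod p) × (Fin (ℓ₂ - 1) → ZMod p) × (Fin ℓ₃ → ZMod p) //
        (∀ i, x.1 i ≠ 0) ∧ Function.Injective x.1 ∧
        (∀ j, x.2.1 j ≠ 0) ∧ Function.Injective x.2.1 ∧
        (∀ k, x.2.2 k ≠ 0) ∧ Function.Injective x.2.2 ∧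
        (∀ i k, x.1 i + x.2.2 k ≠ 0) ∧
        (∀ j k, x.2.1 j + x.2.2 k ≠ 0) ∧
        (∀ i j k, x.1 i + x.2.1 j + x.2.2 k ≠ 0)} := by
  obtain ⟨m, rfl⟩ := Nat.exists_eq_add_one_of_ne_zero h₁.ne'
  obtain ⟨n, rfl⟩ := Nat.exists_eq_add_one_of_ne_zero h₂.ne'
  have h := card_zeroSumFree (G := ZMod p) m n (Fin ℓ₃)
  rw [Nat.card_zmod] at h
  exact h

/-- Finite-field count: the number of tuples `(x, y, z)` over `𝔽_p` with the `x_i`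
pairwise distinct, the `y_j` pairwise distinct, the `z_k` pairwise distinct and
`x_i + y_j + z_k ≠ 0` for all `i, j, k` equals `p²` times the number of tuples
`(x', y', z')` of lengths `ℓ₁-1, ℓ₂-1, ℓ₃` with all coordinates nonzero and pairwise
distinct within each block, `x'_i + z'_k ≠ 0`, `y'_j + z'_k ≠ 0`, and
`x'_i + y'_j + z'_k ≠ 0`. -/
theorem stmt_15 (p ℓ₁ ℓ₂ ℓ₃ : ℕ) [Fact p.Prime]
    (h₁ : 0 < ℓ₁) (h₂ : 0 < ℓ₂) (h₃ : 0 < ℓ₃) :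
    Nat.card {xyz : (Fin ℓ₁ → ZMod p) × (Fin ℓ₂ → ZMod p) × (Fin ℓ₃ → ZMod p) //
        Function.Injective xyz.1 ∧ Function.Injective xyz.2.1 ∧ Function.Injective xyz.2.2 ∧
        ∀ i j k, xyz.1 i + xyz.2.1 j + xyz.2.2 k ≠ 0} =
    p ^ 2 * Nat.card {x : (Fin (ℓ₁ - 1) → ZMod p) × (Fin (ℓ₂ - 1) → ZMod p) × (Fin ℓ₃ → ZMod p) //
        (∀ i, x.1 i ≠ 0) ∧ Function.Injective x.1 ∧
        (∀ j, x.2.1 j ≠ 0) ∧ Function.Injective x.2.1 ∧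
        (∀ k, x.2.2 k ≠ 0) ∧ Function.Injective x.2.2 ∧
        (∀ i k, x.1 i + x.2.2 k ≠ 0) ∧
        (∀ j k, x.2.1 j + x.2.2 k ≠ 0) ∧
        (∀ i j k, x.1 i + x.2.1 j + x.2.2 k ≠ 0)} :=
  stmt_15_general p ℓ₁ ℓ₂ ℓ₃ h₁ h₂
end

section
/- For positive integers ℓ_1, ℓ_2, the characteristic polynomial of the real hyperplane arrangement 𝒜_{ℓ_1,ℓ_2,1} in ℝ^{ℓ_1+ℓ_2+1} with hyperplanes x_i + y_j + z_1 = 0 (1 ≤ i ≤ ℓ_1, 1 ≤ j ≤ ℓ_2), x_{i_1} = x_{i_2} (i_1 < i_2), and y_{j_1} = y_{j_2} (j_1 < j_2) equals t^2(t−1)(t−2)⋯(t−(ℓ_1+ℓ_2−1)); consequently the number of chambers is (ℓ_1+ℓ_2)!. -/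
/-!
In the coordinates `x_i` and `y'_j = -y_j - z` the hyperplanes read `x_i = y'_j`,
`x_{i₁} = x_{i₂}` and `y'_{j₁} = y'_{j₂}`, so the arrangement is the pullback of the braid
arrangement of `ℝ^{ℓ₁+ℓ₂}` along a linear surjection whose kernel is the line of `z`.
Its flats are the subspaces on which the new coordinates are constant on the blocks of a
partition `r` of the `ℓ₁ + ℓ₂` coordinates; they have dimension `#blocks + 1`, and inclusion
reverses refinement. Counting maps into an `m`-element set by their kernel and applying Möbius
inversion on the partition lattice gives `∑_r μ(r) m^{#blocks} = m(m-1)⋯(m-ℓ₁-ℓ₂+1)` for every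
`m ∈ ℕ`, hence as polynomials. A point off the hyperplanes has pairwise distinct new coordinates;
the permutation sorting them is locally constant and its fibres are open convex cones, so the
chambers correspond to the `(ℓ₁+ℓ₂)!` permutations.
-/

/-- Index type of the hyperplanes of the arrangement `𝒜_{ℓ₁,ℓ₂,1}`:
hyperplanes `x_i + y_j + z = 0`, `x_{i₁} = x_{i₂}` and `y_{j₁} = y_{j₂}`. -/
abbrev Idx16 (ℓ₁ ℓ₂ : ℕ) :=
  (Fin ℓ₁ × Fin ℓ₂) ⊕ {q : Fin ℓ₁ × Fin ℓ₁ // q.1 < q.2} ⊕ {q : Fin ℓ₂ × Fin ℓ₂ // q.1 < q.2}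

/-- Coordinates of the ambient space `ℝ^{ℓ₁+ℓ₂+1}`: the `x`-coordinates, the
`y`-coordinates and the single `z`-coordinate. -/
abbrev Coord16 (ℓ₁ ℓ₂ : ℕ) := Fin ℓ₁ ⊕ Fin ℓ₂ ⊕ Unit

/-- The hyperplane with coefficient (co)vector `c`. -/
noncomputable def hyp16 (ℓ₁ ℓ₂ : ℕ) (c : Coord16 ℓ₁ ℓ₂ → ℝ) :
    Submodule ℝ (Coord16 ℓ₁ ℓ₂ → ℝ) :=
  LinearMap.ker (∑ s, c s • (LinearMap.proj s : (Coord16 ℓ₁ ℓ₂ → ℝ) →ₗ[ℝ] ℝ))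

/-- The hyperplanes of the arrangement `𝒜_{ℓ₁,ℓ₂,1}`. -/
noncomputable def H16 (ℓ₁ ℓ₂ : ℕ) : Idx16 ℓ₁ ℓ₂ → Submodule ℝ (Coord16 ℓ₁ ℓ₂ → ℝ)
  | Sum.inl q => hyp16 ℓ₁ ℓ₂
      (Pi.single (Sum.inl q.1) 1 + Pi.single (Sum.inr (Sum.inl q.2)) 1 +
        Pi.single (Sum.inr (Sum.inr ())) 1)
  | Sum.inr (Sum.inl q) => hyp16 ℓ₁ ℓ₂
      (Pi.single (Sum.inl q.1.1) 1 - Pi.single (Sum.inl q.1.2) 1)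
  | Sum.inr (Sum.inr q) => hyp16 ℓ₁ ℓ₂
      (Pi.single (Sum.inr (Sum.inl q.1.1)) 1 - Pi.single (Sum.inr (Sum.inl q.1.2)) 1)

/-- The intersection poset `L(𝒜)`: all intersections of subfamilies of hyperplanes
(the empty intersection being the whole space). -/
noncomputable def L16 (ℓ₁ ℓ₂ : ℕ) : Finset (Submodule ℝ (Coord16 ℓ₁ ℓ₂ → ℝ)) :=
  letI := Classical.decEq (Submodule ℝ (Coord16 ℓ₁ ℓ₂ → ℝ))
  Finset.image (fun S : Finset (Idx16 ℓ₁ ℓ₂) => ⨅ i ∈ S, H16 ℓ₁ ℓ₂ i) Finset.univ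

open Function Finset Relation

section Partitions

variable {α : Type*}

instance Setoid.instFinite [Finite α] : Finite (Setoid α) :=
  Finite.of_injective (fun r : Setoid α => ⇑r) fun _ _ h =>
    Setoid.ext fun a b => Iff.of_eq (congrFun (congrFun h a) b)

noncomputable instance Setoid.instFintype [Finite α] : Fintype (Setoid α) := Fintype.ofFinite _

variable [Fintype α]

open Classical in
theorem Setoid.card_subtype_le_ker (β : Type*) [Fintype β] (r : Setoid α) :
    Fintype.card {f : α → β // r ≤ Setoid.ker f} = Fintype.card β ^ Nat.card (Quotient r) := by
  rw [Fintype.card_congr (Setoid.liftEquiv r), Fintype.card_fun, Nat.card_eq_fintype_card]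

open Classical in
theorem Setoid.sum_moebius_mul_card_pow (μ : Setoid α → ℤ)
    (hμ : ∀ r, ∑ s ∈ univ.filter (· ≤ r), μ s = if r = ⊥ then 1 else 0)
    (β : Type*) [Fintype β] :
    ∑ r, μ r * (Fintype.card β : ℤ) ^ Nat.card (Quotient r) = Fintype.card (α ↪ β) := by
  calc ∑ r, μ r * (Fintype.card β : ℤ) ^ Nat.card (Quotient r)
      = ∑ r, ∑ f : α → β, if r ≤ Setoid.ker f then μ r else 0 := by
        refine Finset.sum_congr rfl fun r _ => ?_
        rw [← Finset.sum_filter, Finset.sum_const, nsmul_eq_mul, mul_comm, ← Fintype.card_subtype,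
          Setoid.card_subtype_le_ker]
        push_cast; rfl
    _ = ∑ f : α → β, ∑ r ∈ univ.filter (· ≤ Setoid.ker f), μ r := by
        rw [Finset.sum_comm]
        simp only [Finset.sum_filter]
    _ = ∑ f : α → β, if Injective f then 1 else 0 := by
        simp only [hμ, Setoid.injective_iff_ker_bot]
    _ = Fintype.card (α ↪ β) := by
        rw [Finset.sum_boole, ← Fintype.card_subtype,
          Fintype.card_congr (Equiv.subtypeInjectiveEquivEmbedding α β)]

open Classical in
theorem Setoid.sum_moebius_mul_pow (μ : Setoid α → ℤ)
    (hμ : ∀ r, ∑ s ∈ univ.filter (· ≤ r), μ s = if r = ⊥ then 1 else 0) (t : ℤ) :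
    ∑ r, μ r * t ^ Nat.card (Quotient r) = (descPochhammer ℤ (Fintype.card α)).eval t := by
  let p : Polynomial ℤ := ∑ r, Polynomial.C (μ r) * Polynomial.X ^ Nat.card (Quotient r)
  suffices p = descPochhammer ℤ (Fintype.card α) by
    simpa [p, Polynomial.eval_finsetSum] using congrArg (Polynomial.eval t) this
  refine Polynomial.eq_of_infinite_eval_eq _ _ <|
    (Set.infinite_range_of_injective Nat.cast_injective).mono ?_
  rintro _ ⟨m, rfl⟩
  have := Setoid.sum_moebius_mul_card_pow μ hμ (Fin m)
  simp only [Fintype.card_fin, Fintype.card_embedding_eq] at this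
  simpa only [Set.mem_ofPred_eq, p, Polynomial.eval_finsetSum, Polynomial.eval_mul,
    Polynomial.eval_C, Polynomial.eval_pow, Polynomial.eval_X,
    descPochhammer_eval_eq_descFactorial] using this

end Partitions

theorem Submodule.finrank_comap_of_surjective {K V W : Type*} [DivisionRing K] [AddCommGroup V]
    [Module K V] [AddCommGroup W] [Module K W] [FiniteDimensional K V] {f : V →ₗ[K] W}
    (hf : Surjective f) (P : Submodule K W) :
    Module.finrank K (P.comap f) = Module.finrank K P + Module.finrank K (LinearMap.ker f) := by
  have h := LinearMap.finrank_range_add_finrank_ker (f.domRestrict (P.comap f))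
  rw [LinearMap.range_domRestrict, Submodule.map_comap_eq_of_surjective hf,
    LinearMap.ker_domRestrict,
    (Submodule.comapSubtypeEquivOfLe (LinearMap.ker_le_comap f)).finrank_eq] at h
  exact h.symm

section BraidFlat

variable {κ : Type*}

def braidFlat (r : Setoid κ) : Submodule ℝ (κ → ℝ) where
  carrier := {w | r ≤ Setoid.ker w}
  add_mem' hv hw _ _ hab := congrArg₂ (· + ·) (hv hab) (hw hab)
  zero_mem' _ _ _ := rfl
  smul_mem' c _ hw _ _ hab := congrArg (c • ·) (hw hab)

theorem mem_braidFlat {r : Setoid κ} {w : κ → ℝ} : w ∈ braidFlat r ↔ r ≤ Setoid.ker w := Iff.rfl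

theorem braidFlat_bot : braidFlat (⊥ : Setoid κ) = ⊤ :=
  eq_top_iff.2 fun w _ => (bot_le : ⊥ ≤ Setoid.ker w)

theorem braidFlat_le_braidFlat_iff {r s : Setoid κ} : braidFlat r ≤ braidFlat s ↔ s ≤ r := by
  classical
  refine ⟨fun h a b hab => ?_, fun h w hw => h.trans hw⟩
  let w : κ → ℝ := fun k => if r a k then 1 else 0
  have hw : w ∈ braidFlat r := fun k k' hkk' => by
    simp only [w, Setoid.ker_def]
    congr 1
    exact propext ⟨fun h => r.trans h hkk', fun h => r.trans h (r.symm hkk')⟩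
  have := h hw hab
  simp only [w, Setoid.ker_def, if_pos (r.refl a)] at this
  by_contra hr
  simp [hr] at this

theorem braidFlat_eq_range (r : Setoid κ) :
    braidFlat r = LinearMap.range (LinearMap.funLeft ℝ ℝ (Quotient.mk r)) := by
  ext w
  refine ⟨fun hw => ⟨Quotient.lift w hw, rfl⟩, ?_⟩
  rintro ⟨g, rfl⟩ a b hab
  exact congrArg g (Quotient.sound hab)

theorem finrank_braidFlat [Finite κ] (r : Setoid κ) :
    Module.finrank ℝ (braidFlat r) = Nat.card (Quotient r) := by
  have := Fintype.ofFinite (Quotient r)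
  rw [braidFlat_eq_range, LinearMap.finrank_range_of_inj
    (LinearMap.funLeft_injective_of_surjective _ _ _ Quotient.mk_surjective),
    Module.finrank_fintype_fun_eq_card, Nat.card_eq_fintype_card]

end BraidFlat

theorem ConnectedComponents.natCard_eq_of_isPreconnected_fibers {X ι : Type*} [TopologicalSpace X]
    (f : X → ι) (hf : Surjective f) (hopen : ∀ i, IsOpen (f ⁻¹' {i}))
    (hconn : ∀ i, IsPreconnected (f ⁻¹' {i})) :
    Nat.card (ConnectedComponents X) = Nat.card ι := by
  let _ : TopologicalSpace ι := ⊥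
  have : DiscreteTopology ι := ⟨rfl⟩
  have hc : Continuous f := continuous_discrete_rng.2 hopen
  refine Nat.card_eq_of_bijective hc.connectedComponentsLift ⟨?_, ?_⟩
  · intro x y hxy
    obtain ⟨x, rfl⟩ := ConnectedComponents.surjective_coe x
    obtain ⟨y, rfl⟩ := ConnectedComponents.surjective_coe y
    simp only [Continuous.connectedComponentsLift_apply_coe] at hxy
    exact ConnectedComponents.coe_eq_coe'.2
      ((hconn (f y)).subset_connectedComponent (Set.mem_singleton (f y)) hxy)
  · intro i
    obtain ⟨x, rfl⟩ := hf i
    exact ⟨x, hc.connectedComponentsLift_apply_coe x⟩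

section Chambers

theorem Tuple.sort_eq_iff_strictMono {α : Type*} [LinearOrder α] {n : ℕ} {w : Fin n → α}
    (hw : Injective w) (σ : Equiv.Perm (Fin n)) : Tuple.sort w = σ ↔ StrictMono (w ∘ σ) := by
  refine ⟨?_, fun h => (Tuple.eq_sort_iff.2 ⟨h.monotone, fun i j hij hf => ?_⟩).symm⟩
  · rintro rfl
    exact (Tuple.monotone_sort w).strictMono_of_injective (hw.comp (Equiv.injective _))
  · exact absurd (σ.injective (hw hf)) hij.ne

theorem isOpen_setOf_strictMono_comp {n : ℕ} (σ : Equiv.Perm (Fin n)) :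
    IsOpen {w : Fin n → ℝ | StrictMono (w ∘ σ)} := by
  simp only [StrictMono, Set.ofPred_forall]
  exact isOpen_iInter_of_finite fun i => isOpen_iInter_of_finite fun j =>
    isOpen_iInter_of_finite fun _ => isOpen_lt (continuous_apply _) (continuous_apply _)

theorem convex_setOf_strictMono_comp {n : ℕ} (σ : Equiv.Perm (Fin n)) :
    Convex ℝ {w : Fin n → ℝ | StrictMono (w ∘ σ)} := by
  intro w hw w' hw' a b ha hb hab i j hij
  have h := hw hij
  have h' := hw' hij
  simp only [comp_apply, Pi.add_apply, Pi.smul_apply, smul_eq_mul] at h h' ⊢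
  rcases ha.eq_or_lt with rfl | ha
  · simpa [(zero_add b).symm.trans hab] using h'
  · linarith [mul_lt_mul_of_pos_left h ha, mul_le_mul_of_nonneg_left h'.le hb]

variable {V : Type*} [AddCommGroup V] [Module ℝ V] [TopologicalSpace V] [ContinuousAdd V]
  [ContinuousSMul ℝ V]

theorem natCard_connectedComponents_injective_fin {n : ℕ} (u : V →L[ℝ] (Fin n → ℝ))
    (hu : Surjective u) :
    Nat.card (ConnectedComponents {v : V // Injective (u v)}) = n.factorial := by
  let chamber : {v : V // Injective (u v)} → Equiv.Perm (Fin n) := fun v => Tuple.sort (u v)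
  have hfiber (σ : Equiv.Perm (Fin n)) :
      chamber ⁻¹' {σ} = Subtype.val ⁻¹' (u ⁻¹' {w | StrictMono (w ∘ σ)}) :=
    Set.ext fun v => Tuple.sort_eq_iff_strictMono v.2 σ
  have hinj {σ : Equiv.Perm (Fin n)} {v : V} (hv : StrictMono (u v ∘ σ)) : Injective (u v) := by
    simpa using hv.injective.comp σ.symm.injective
  rw [ConnectedComponents.natCard_eq_of_isPreconnected_fibers chamber, Nat.card_perm,
    Nat.card_fin]
  case hf =>
    intro σ
    obtain ⟨v, hv⟩ := hu fun i => (σ.symm i : ℝ)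
    have hmono : StrictMono (u v ∘ σ) := fun i j hij => by simpa [hv] using hij
    exact ⟨⟨v, hinj hmono⟩, (Tuple.sort_eq_iff_strictMono (hinj hmono) σ).2 hmono⟩
  case hopen =>
    intro σ
    rw [hfiber]
    exact ((isOpen_setOf_strictMono_comp σ).preimage u.continuous).preimage continuous_subtype_val
  case hconn =>
    intro σ
    rw [hfiber, ← Topology.IsEmbedding.subtypeVal.isInducing.isPreconnected_image,
      Set.image_preimage_eq_inter_range, Subtype.range_coe_subtype]
    convert ((convex_setOf_strictMono_comp σ).linear_preimage u.toLinearMap).isPreconnected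
    exact Set.inter_eq_left.2 fun v hv => hinj hv

theorem natCard_connectedComponents_injective {κ : Type*} [Fintype κ] (u : V →L[ℝ] (κ → ℝ))
    (hu : Surjective u) :
    Nat.card (ConnectedComponents {v : V // Injective (u v)}) = (Fintype.card κ).factorial := by
  let e := (LinearEquiv.funCongrLeft ℝ ℝ (Fintype.equivFin κ).symm).toContinuousLinearEquiv
  have h := natCard_connectedComponents_injective_fin (e.toContinuousLinearMap.comp u)
    (e.surjective.comp hu)
  -- `rw`, not `simp`: the subspace topology depends on the predicate being rewritten.
  have hpred : (fun v => Injective (e.toContinuousLinearMap.comp u v)) = fun v => Injective (u v) :=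
    funext fun v => propext (Equiv.injective_comp _ (u v))
  rwa [hpred] at h

end Chambers

namespace EdelmanReiner

variable {ℓ₁ ℓ₂ : ℕ}

def braidCoords : (Coord16 ℓ₁ ℓ₂ → ℝ) →ₗ[ℝ] (Fin ℓ₁ ⊕ Fin ℓ₂ → ℝ) where
  toFun v := Sum.elim (fun i => v (.inl i)) (fun j => -v (.inr (.inl j)) - v (.inr (.inr ())))
  map_add' v w := by ext (i | j) <;> simp only [Pi.add_apply, Sum.elim_inl, Sum.elim_inr]; ring
  map_smul' c v := by
    ext (i | j) <;> simp only [Pi.smul_apply, smul_eq_mul, RingHom.id_apply, Sum.elim_inl,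
      Sum.elim_inr]; ring

theorem braidCoords_surjective : Surjective (braidCoords (ℓ₁ := ℓ₁) (ℓ₂ := ℓ₂)) := by
  intro w
  refine ⟨fun | .inl i => w (.inl i) | .inr (.inl j) => -w (.inr j) | .inr (.inr _) => 0, ?_⟩
  ext (i | j) <;> simp [braidCoords]

theorem finrank_ker_braidCoords :
    Module.finrank ℝ (LinearMap.ker (braidCoords (ℓ₁ := ℓ₁) (ℓ₂ := ℓ₂))) = 1 := by
  have h := LinearMap.finrank_range_add_finrank_ker (braidCoords (ℓ₁ := ℓ₁) (ℓ₂ := ℓ₂))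
  rw [LinearMap.range_eq_top.2 braidCoords_surjective, finrank_top] at h
  simp only [Module.finrank_fintype_fun_eq_card, Fintype.card_sum, Fintype.card_fin,
    Fintype.card_unit] at h
  omega

def pair : Idx16 ℓ₁ ℓ₂ → (Fin ℓ₁ ⊕ Fin ℓ₂) × (Fin ℓ₁ ⊕ Fin ℓ₂)
  | .inl q => (.inl q.1, .inr q.2)
  | .inr (.inl q) => (.inl q.1.1, .inl q.1.2)
  | .inr (.inr q) => (.inr q.1.1, .inr q.1.2)

theorem pair_fst_ne_snd (idx : Idx16 ℓ₁ ℓ₂) : (pair idx).1 ≠ (pair idx).2 := by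
  rcases idx with q | q | q
  · simp [pair]
  · simpa [pair] using q.2.ne
  · simpa [pair] using q.2.ne

theorem exists_pair_eq {a b : Fin ℓ₁ ⊕ Fin ℓ₂} (h : a ≠ b) :
    ∃ idx : Idx16 ℓ₁ ℓ₂, pair idx = (a, b) ∨ pair idx = (b, a) := by
  rcases a with i | j <;> rcases b with i' | j'
  · rcases lt_or_gt_of_ne (fun e => h (congrArg Sum.inl e)) with hl | hl
    exacts [⟨.inr (.inl ⟨(i, i'), hl⟩), .inl rfl⟩, ⟨.inr (.inl ⟨(i', i), hl⟩), .inr rfl⟩]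
  · exact ⟨.inl (i, j'), .inl rfl⟩
  · exact ⟨.inl (i', j), .inr rfl⟩
  · rcases lt_or_gt_of_ne (fun e => h (congrArg Sum.inr e)) with hl | hl
    exacts [⟨.inr (.inr ⟨(j, j'), hl⟩), .inl rfl⟩, ⟨.inr (.inr ⟨(j', j), hl⟩), .inr rfl⟩]

theorem mem_hyp16 {c v : Coord16 ℓ₁ ℓ₂ → ℝ} : v ∈ hyp16 ℓ₁ ℓ₂ c ↔ ∑ s, c s * v s = 0 := by
  simp [hyp16, LinearMap.sum_apply]

theorem mem_H16 {idx : Idx16 ℓ₁ ℓ₂} {v : Coord16 ℓ₁ ℓ₂ → ℝ} :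
    v ∈ H16 ℓ₁ ℓ₂ idx ↔ braidCoords v (pair idx).1 = braidCoords v (pair idx).2 := by
  rcases idx with q | q | q <;>
  simp only [H16, mem_hyp16, Pi.add_apply, Pi.sub_apply, add_mul, sub_mul, sum_add_distrib,
    sum_sub_distrib, Pi.single_apply, ite_mul, one_mul, zero_mul, sum_ite_eq', mem_univ, if_true,
    pair, braidCoords, LinearMap.coe_mk, AddHom.coe_mk, Sum.elim_inl, Sum.elim_inr] <;>
  constructor <;> intro h <;> linarith

def flat (r : Setoid (Fin ℓ₁ ⊕ Fin ℓ₂)) : Submodule ℝ (Coord16 ℓ₁ ℓ₂ → ℝ) :=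
  (braidFlat r).comap braidCoords

theorem flat_le_flat_iff {r s : Setoid (Fin ℓ₁ ⊕ Fin ℓ₂)} : flat r ≤ flat s ↔ s ≤ r :=
  (Submodule.comap_le_comap_iff_of_surjective braidCoords_surjective).trans
    braidFlat_le_braidFlat_iff

theorem flat_injective : Injective (flat (ℓ₁ := ℓ₁) (ℓ₂ := ℓ₂)) := fun _ _ h =>
  le_antisymm (flat_le_flat_iff.1 h.ge) (flat_le_flat_iff.1 h.le)

theorem flat_eq_top_iff {r : Setoid (Fin ℓ₁ ⊕ Fin ℓ₂)} : flat r = ⊤ ↔ r = ⊥ := by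
  have hbot : flat (⊥ : Setoid (Fin ℓ₁ ⊕ Fin ℓ₂)) = ⊤ := by
    rw [flat, braidFlat_bot, Submodule.comap_top]
  rw [← hbot, flat_injective.eq_iff]

theorem finrank_flat (r : Setoid (Fin ℓ₁ ⊕ Fin ℓ₂)) :
    Module.finrank ℝ (flat r) = Nat.card (Quotient r) + 1 := by
  rw [flat, Submodule.finrank_comap_of_surjective braidCoords_surjective, finrank_braidFlat,
    finrank_ker_braidCoords]

def pairSetoid (S : Finset (Idx16 ℓ₁ ℓ₂)) : Setoid (Fin ℓ₁ ⊕ Fin ℓ₂) :=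
  EqvGen.setoid fun a b => ∃ idx ∈ S, pair idx = (a, b)

theorem iInf_H16 (S : Finset (Idx16 ℓ₁ ℓ₂)) : ⨅ idx ∈ S, H16 ℓ₁ ℓ₂ idx = flat (pairSetoid S) := by
  ext v
  simp only [Submodule.mem_iInf, mem_H16, flat, Submodule.mem_comap, mem_braidFlat]
  refine ⟨fun h => Setoid.eqvGen_le ?_, fun h idx hidx => h (EqvGen.rel _ _ ⟨idx, hidx, rfl⟩)⟩
  rintro a b ⟨idx, hidx, hp⟩
  simpa [hp] using h idx hidx

open Classical in
theorem pairSetoid_filter (r : Setoid (Fin ℓ₁ ⊕ Fin ℓ₂)) :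
    pairSetoid (univ.filter fun idx => r (pair idx).1 (pair idx).2) = r := by
  refine le_antisymm (Setoid.eqvGen_le ?_) fun a b hab => ?_
  · rintro a b ⟨idx, hidx, hp⟩
    simpa [hp] using hidx
  by_cases hne : a = b
  · exact hne ▸ (pairSetoid _).refl a
  obtain ⟨idx, hp | hp⟩ := exists_pair_eq hne
  · exact EqvGen.rel _ _ ⟨idx, by simp [hp, hab], hp⟩
  · exact EqvGen.symm _ _ (EqvGen.rel _ _ ⟨idx, by simp [hp, r.symm hab], hp⟩)

open Classical in
theorem L16_eq_image_flat : L16 ℓ₁ ℓ₂ = univ.image flat := by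
  ext x
  simp only [L16, mem_image, mem_univ, true_and, iInf_H16]
  exact ⟨fun ⟨S, hS⟩ => ⟨_, hS⟩, fun ⟨r, hr⟩ => ⟨_, (congrArg flat (pairSetoid_filter r)).trans hr⟩⟩

theorem forall_notMem_H16_iff {v : Coord16 ℓ₁ ℓ₂ → ℝ} :
    (∀ idx, v ∉ H16 ℓ₁ ℓ₂ idx) ↔ Injective (braidCoords v) := by
  simp only [mem_H16]
  refine ⟨fun h a b hab => by_contra fun hne => ?_, fun h idx hidx => pair_fst_ne_snd idx (h hidx)⟩
  obtain ⟨idx, hp | hp⟩ := exists_pair_eq hne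
  · exact h idx (by rw [hp]; exact hab)
  · exact h idx (by rw [hp]; exact hab.symm)

theorem natCard_chambers :
    Nat.card (ConnectedComponents {v : Coord16 ℓ₁ ℓ₂ → ℝ // ∀ idx, v ∉ H16 ℓ₁ ℓ₂ idx}) =
      (ℓ₁ + ℓ₂).factorial := by
  have h := natCard_connectedComponents_injective
    (LinearMap.toContinuousLinearMap (braidCoords (ℓ₁ := ℓ₁) (ℓ₂ := ℓ₂))) braidCoords_surjective
  simp only [Fintype.card_sum, Fintype.card_fin, LinearMap.coe_toContinuousLinearMap'] at h
  have hpred : (fun v => ∀ idx, v ∉ H16 ℓ₁ ℓ₂ idx) = fun v => Injective (braidCoords v) :=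
    funext fun _ => propext forall_notMem_H16_iff
  rwa [hpred]

open Classical in
theorem sum_moebius_flat (μ : Submodule ℝ (Coord16 ℓ₁ ℓ₂ → ℝ) → ℤ)
    (hμ : ∀ x ∈ L16 ℓ₁ ℓ₂,
      (∑ y ∈ (L16 ℓ₁ ℓ₂).filter (fun y => x ≤ y), μ y) = if x = ⊤ then 1 else 0)
    (r : Setoid (Fin ℓ₁ ⊕ Fin ℓ₂)) :
    ∑ s ∈ univ.filter (· ≤ r), μ (flat s) = if r = ⊥ then 1 else 0 := by
  have h := hμ (flat r) (L16_eq_image_flat ▸ mem_image_of_mem _ (mem_univ r))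
  rwa [L16_eq_image_flat, filter_image, sum_image flat_injective.injOn,
    filter_congr fun s _ => flat_le_flat_iff, if_congr flat_eq_top_iff rfl rfl] at h

open Classical in
theorem sum_moebius_mul_pow_finrank (μ : Submodule ℝ (Coord16 ℓ₁ ℓ₂ → ℝ) → ℤ)
    (hμ : ∀ x ∈ L16 ℓ₁ ℓ₂,
      (∑ y ∈ (L16 ℓ₁ ℓ₂).filter (fun y => x ≤ y), μ y) = if x = ⊤ then 1 else 0) (t : ℤ) :
    ∑ x ∈ L16 ℓ₁ ℓ₂, μ x * t ^ Module.finrank ℝ x =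
      t * (descPochhammer ℤ (ℓ₁ + ℓ₂)).eval t := by
  have h := Setoid.sum_moebius_mul_pow _ (sum_moebius_flat μ hμ) t
  rw [Fintype.card_sum, Fintype.card_fin, Fintype.card_fin] at h
  rw [← h, L16_eq_image_flat, sum_image flat_injective.injOn, mul_sum]
  exact sum_congr rfl fun r _ => by rw [finrank_flat, pow_succ]; ring

end EdelmanReiner

open Classical in
theorem stmt_16_general (ℓ₁ ℓ₂ : ℕ) (h₁ : 0 < ℓ₁)
    (μ : Submodule ℝ (Coord16 ℓ₁ ℓ₂ → ℝ) → ℤ)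
    (hμ : ∀ x ∈ L16 ℓ₁ ℓ₂,
      (∑ y ∈ (L16 ℓ₁ ℓ₂).filter (fun y => x ≤ y), μ y) = if x = ⊤ then 1 else 0) :
    (∀ t : ℤ,
      ∑ x ∈ L16 ℓ₁ ℓ₂, μ x * t ^ (Module.finrank ℝ x) =
        t ^ 2 * ∏ i ∈ Finset.range (ℓ₁ + ℓ₂ - 1), (t - (i + 1 : ℤ))) ∧
    Nat.card (ConnectedComponents
        {v : Coord16 ℓ₁ ℓ₂ → ℝ // ∀ i : Idx16 ℓ₁ ℓ₂, v ∉ H16 ℓ₁ ℓ₂ i}) =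
      (ℓ₁ + ℓ₂).factorial := by
  refine ⟨fun t => ?_, EdelmanReiner.natCard_chambers⟩
  obtain ⟨n, hn⟩ : ∃ n, ℓ₁ + ℓ₂ = n + 1 := ⟨ℓ₁ + ℓ₂ - 1, by omega⟩
  rw [EdelmanReiner.sum_moebius_mul_pow_finrank μ hμ, descPochhammer_eval_eq_prod_range, hn,
    prod_range_succ', Nat.add_sub_cancel]
  push_cast
  ring

open Classical in
/-- Edelman–Reiner: the characteristic polynomial of the arrangement `𝒜_{ℓ₁,ℓ₂,1}` is
`t²(t-1)(t-2)⋯(t-(ℓ₁+ℓ₂-1))`; consequently, by Zaslavsky's theorem, the number of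
chambers (connected components of the complement) is `(ℓ₁+ℓ₂)!`.  Here `μ` is the
Möbius function of the intersection poset, characterized by its defining property
(`∑_{y ≤ x in the poset, i.e. y ⊇ x} μ(y)` is `1` for `x = ℝ^D` and `0` otherwise). -/
theorem stmt_16 (ℓ₁ ℓ₂ : ℕ) (h₁ : 0 < ℓ₁) (h₂ : 0 < ℓ₂)
    (μ : Submodule ℝ (Coord16 ℓ₁ ℓ₂ → ℝ) → ℤ)
    (hμ : ∀ x ∈ L16 ℓ₁ ℓ₂,
      (∑ y ∈ (L16 ℓ₁ ℓ₂).filter (fun y => x ≤ y), μ y) = if x = ⊤ then 1 else 0) :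
    (∀ t : ℤ,
      ∑ x ∈ L16 ℓ₁ ℓ₂, μ x * t ^ (Module.finrank ℝ x) =
        t ^ 2 * ∏ i ∈ Finset.range (ℓ₁ + ℓ₂ - 1), (t - (i + 1 : ℤ))) ∧
    Nat.card (ConnectedComponents
        {v : Coord16 ℓ₁ ℓ₂ → ℝ // ∀ i : Idx16 ℓ₁ ℓ₂, v ∉ H16 ℓ₁ ℓ₂ i}) =
      (ℓ₁ + ℓ₂).factorial :=
  stmt_16_general ℓ₁ ℓ₂ h₁ μ hμ
end
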